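/- arXiv:1212.1243 — 8 statements merged into one kernel-verified Lean document; each statement's English description precedes it below -/
import Mathlib

section
/- With notation as above, π is the unique projector of End_R(H) onto L whose kernel equals { φ ∈ End_R(H) : [φ, v] = 0 for all v ∈ L }; in particular π is independent of the choice of basis of L. -/
/-!
Writing `π = ∑ i, B(·, eᵢ) • fᵢ` with `(fᵢ)` dual to the basis `(eᵢ)` of `L` under `B`, one gets
`B(π φ, eⱼ) = B(φ, eⱼ)`. Hence `π φ = 0` exactly when `φ` is `B`-orthogonal to `L`, and for `x ∈ L`
the element `x - π x ∈ L` is orthogonal to `L`, so vanishes by non-degeneracy: `π` is a projector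
onto `L`. An idempotent endomorphism is determined by its range and kernel, which gives uniqueness.
-/

namespace Module.Basis

variable {R M N ι : Type*} [CommRing R] [AddCommGroup M] [Module R M] [AddCommGroup N] [Module R N]
  {L : Submodule R M}

theorem forall_mem_map_eq_zero_iff (e : Basis ι R L) (g : M →ₗ[R] N) :
    (∀ v ∈ L, g v = 0) ↔ ∀ i, g (e i) = 0 := by
  refine ⟨fun h i ↦ h _ (e i).2, fun h v hv ↦ ?_⟩
  have hg : g ∘ₗ L.subtype = 0 := e.ext h
  simpa using congr($hg ⟨v, hv⟩)

end Module.Basis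

namespace LinearMap.BilinForm

variable {R M ι : Type*} [CommRing R] [AddCommGroup M] [Module R M] [Fintype ι]
  {L : Submodule R M} (B : LinearMap.BilinForm R M)

def dualBasisProj (e f : ι → L) : Module.End R M :=
  ∑ i, (B.flip (e i : M)).smulRight (f i : M)

theorem dualBasisProj_apply (e f : ι → L) (φ : M) :
    dualBasisProj B e f φ = ∑ i, B φ (e i) • (f i : M) := by
  simp [dualBasisProj]

theorem dualBasisProj_apply_mem (e f : ι → L) (φ : M) : dualBasisProj B e f φ ∈ L := by
  rw [dualBasisProj_apply]
  exact L.sum_mem fun i _ ↦ L.smul_mem _ (f i).2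

variable [DecidableEq ι] {f : ι → L}

theorem apply_dualBasisProj {e : ι → L} (hdual : ∀ i j, B (f i) (e j) = if i = j then 1 else 0)
    (φ : M) (j : ι) : B (dualBasisProj B e f φ) (e j) = B φ (e j) := by
  simp [dualBasisProj_apply, hdual]

theorem dualBasisProj_eq_zero_iff {e : Module.Basis ι R L}
    (hdual : ∀ i j, B (f i) (e j) = if i = j then 1 else 0) (φ : M) :
    dualBasisProj B e f φ = 0 ↔ ∀ v ∈ L, B φ v = 0 := by
  rw [e.forall_mem_map_eq_zero_iff]
  refine ⟨fun h j ↦ ?_, fun h ↦ by simp [dualBasisProj_apply, h]⟩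
  rw [← apply_dualBasisProj B hdual, h, map_zero, LinearMap.zero_apply]

theorem isProj_dualBasisProj {e : Module.Basis ι R L}
    (hdual : ∀ i j, B (f i) (e j) = if i = j then 1 else 0) (hsep : (B.restrict L).SeparatingLeft) :
    IsProj L (dualBasisProj B e f) := by
  refine ⟨dualBasisProj_apply_mem B e f, fun x hx ↦ ?_⟩
  set y : L := ⟨x - dualBasisProj B e f x, L.sub_mem hx (dualBasisProj_apply_mem B e f x)⟩
  have horth : ∀ v ∈ L, B y v = 0 := by
    rw [e.forall_mem_map_eq_zero_iff]
    intro j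
    simp [y, apply_dualBasisProj B hdual]
  have hy : y = 0 := hsep y fun z ↦ horth z z.2
  exact (sub_eq_zero.mp congr(($hy : M))).symm

end LinearMap.BilinForm

open LinearMap.BilinForm in
theorem stmt_1_general {R H : Type*} [CommRing R]
    [AddCommGroup H] [Module R H]
    (L : Submodule R (Module.End R H))
    (Q : QuadraticForm R L)
    (hnd : (QuadraticMap.polarBilin Q).Nondegenerate)
    (B : LinearMap.BilinForm R (Module.End R H))
    (hBL : ∀ x y : L, B (x : Module.End R H) (y : Module.End R H) = QuadraticMap.polarBilin Q x y)
    (m : ℕ) (e : Module.Basis (Fin m) R L) (Ae : Fin m → L)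
    (hA : ∀ i j, QuadraticMap.polarBilin Q (Ae i) (e j) = if i = j then 1 else 0)
    (π : Module.End R (Module.End R H))
    (hπ : ∀ φ : Module.End R H, π φ = ∑ i, B φ ((e i : L) : Module.End R H) • ((Ae i : L) : Module.End R H)) :
    (π ∘ₗ π = π ∧ LinearMap.range π = L ∧
      (∀ φ : Module.End R H, π φ = 0 ↔ ∀ v ∈ L, B φ v = 0)) ∧
    ∀ π' : Module.End R (Module.End R H),
      (π' ∘ₗ π' = π' ∧ LinearMap.range π' = L ∧
        (∀ φ : Module.End R H, π' φ = 0 ↔ ∀ v ∈ L, B φ v = 0)) → π' = π := by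
  have hrestrict : B.restrict L = QuadraticMap.polarBilin Q := LinearMap.ext₂ hBL
  have hdual : ∀ i j, B (Ae i) (e j) = if i = j then 1 else 0 := fun i j ↦ (hBL _ _).trans (hA i j)
  obtain rfl : π = dualBasisProj B e Ae := LinearMap.ext fun φ ↦ by rw [hπ, dualBasisProj_apply]
  have hproj := isProj_dualBasisProj B hdual (hrestrict ▸ hnd.1)
  have hker := dualBasisProj_eq_zero_iff B hdual
  refine ⟨⟨hproj.isIdempotentElem, hproj.range, hker⟩, fun π' ⟨hidem, hrange, hker'⟩ ↦ ?_⟩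
  refine LinearMap.IsIdempotentElem.ext hidem hproj.isIdempotentElem
    ⟨hrange.trans hproj.range.symm, ?_⟩
  ext φ
  simp only [LinearMap.mem_ker, hker', hker]

/-- With notation as in Statement 0 (normalized trace pairing `B` on
`End_R(H)` restricting to the bilinear form of a non-degenerate quadratic space
`L ⊆ End_R(H)`, basis `(eᵢ)` of `L`, `Ae i = A eᵢ` with `A` the inverse Gram matrix, and
`π(φ) = ∑ i, B(φ, eᵢ) • (A eᵢ)`), the map `π` is the unique projector of `End_R(H)` onto `L`
whose kernel equals `{φ : B(φ, v) = 0 for all v ∈ L}`; in particular it is independent of the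
choice of basis. -/
theorem stmt_1 {R H : Type*} [CommRing R] [Invertible (2 : R)]
    [AddCommGroup H] [Module R H] [Module.Free R H] [Module.Finite R H]
    (L : Submodule R (Module.End R H))
    (Q : QuadraticForm R L)
    (hnd : (QuadraticMap.polarBilin Q).Nondegenerate)
    (n : ℕ)
    (B : LinearMap.BilinForm R (Module.End R H))
    (hBtr : ∀ φ ψ : Module.End R H, B φ ψ = (⅟(2 : R)) ^ n * LinearMap.trace R H (φ * ψ))
    (hBL : ∀ x y : L, B (x : Module.End R H) (y : Module.End R H) = QuadraticMap.polarBilin Q x y)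
    (m : ℕ) (e : Module.Basis (Fin m) R L) (Ae : Fin m → L)
    (hA : ∀ i j, QuadraticMap.polarBilin Q (Ae i) (e j) = if i = j then 1 else 0)
    (π : Module.End R (Module.End R H))
    (hπ : ∀ φ : Module.End R H, π φ = ∑ i, B φ ((e i : L) : Module.End R H) • ((Ae i : L) : Module.End R H)) :
    (π ∘ₗ π = π ∧ LinearMap.range π = L ∧
      (∀ φ : Module.End R H, π φ = 0 ↔ ∀ v ∈ L, B φ v = 0)) ∧
    ∀ π' : Module.End R (Module.End R H),
      (π' ∘ₗ π' = π' ∧ LinearMap.range π' = L ∧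
        (∀ φ : Module.End R H, π' φ = 0 ↔ ∀ v ∈ L, B φ v = 0)) → π' = π :=
  stmt_1_general L Q hnd B hBL m e Ae hA π hπ
end

section
/- Let (M,q) be a non-degenerate quadratic space over a field κ of characteristic ≠ 2 and N ⊂ M a subspace. Set 𝔞_N = { f ∈ Hom(N,M) : [f(v),w]_q + [v,f(w)]_q = 0 for all v,w ∈ N }. Then the restriction map Lie(SO(M)) → 𝔞_N, X ↦ X|_N, is surjective. -/
/-!
Choose a complement `P` of `N`, with projections `π` onto `N` and `ρ` onto `P`. The form
`(v, w) ↦ [f (π v), w] - [f (π w), ρ v]` is skew on all of `M` and agrees with `[f v, ·]` for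
`v ∈ N`; skewness on `N` is exactly the hypothesis on `f`. Since `[·,·]` is nondegenerate, this
form is `[X ·, ·]` for a unique endomorphism `X`, which is then skew-adjoint and extends `f`.
-/

namespace LinearMap

theorem exists_skew_extension {R M : Type*} [CommRing R] [AddCommGroup M] [Module R M]
    {N P : Submodule R M} (hNP : IsCompl N P) (D : N →ₗ[R] M →ₗ[R] R)
    (hD : ∀ v w : N, D v w + D w v = 0) :
    ∃ C : M →ₗ[R] M →ₗ[R] R, (∀ v w, C v w + C w v = 0) ∧ ∀ v : N, C v = D v := by
  set π := N.projectionOnto P hNP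
  set ρ := P.projection N hNP.symm
  have hsplit (u : N) (x : M) : D u x = D u (π x) + D u (ρ x) := by
    rw [← map_add, Submodule.coe_projectionOnto_apply, Submodule.projection_add_projection_eq_self]
  refine ⟨D ∘ₗ π - (D ∘ₗ π).flip ∘ₗ ρ, fun v w => ?_, fun v => ?_⟩
  · simp only [sub_apply, comp_apply, flip_apply]
    linear_combination hD (π v) (π w) + hsplit (π v) w + hsplit (π w) v
  · ext w
    simp [π, ρ, Submodule.projection_apply_right hNP.symm v]

namespace BilinForm

theorem exists_skewAdjoint_extension {K V : Type*} [Field K] [AddCommGroup V] [Module K V]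
    [FiniteDimensional K V] {B : LinearMap.BilinForm K V} (hB : B.IsSymm)
    (hnd : B.Nondegenerate) (N : Submodule K V) (f : N →ₗ[K] V)
    (hf : ∀ v w : N, B (f v) w + B v (f w) = 0) :
    ∃ X : Module.End K V, (∀ v w, B (X v) w + B v (X w) = 0) ∧ ∀ v : N, X v = f v := by
  obtain ⟨P, hNP⟩ := N.exists_isCompl
  obtain ⟨C, hC_skew, hC_ext⟩ :=
    exists_skew_extension hNP (B ∘ₗ f) fun v w => by simpa [hB.eq (v : V)] using hf v w
  refine ⟨symmCompOfNondegenerate C B hnd, fun v w => ?_, fun v => ?_⟩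
  · rw [hB.eq v, symmCompOfNondegenerate_left_apply, symmCompOfNondegenerate_left_apply]
    exact hC_skew v w
  · exact LinearMap.ker_eq_bot.mp hnd.ker_eq_bot
      ((comp_symmCompOfNondegenerate_apply C hnd v).trans (hC_ext v))

end BilinForm

end LinearMap

theorem stmt_2_general {κ M : Type*} [Field κ]
    [AddCommGroup M] [Module κ M] [FiniteDimensional κ M]
    (Q : QuadraticForm κ M)
    (hnd : (QuadraticMap.polarBilin Q).Nondegenerate)
    (N : Submodule κ M)
    (f : N →ₗ[κ] M)
    (hf : ∀ v w : N,
      QuadraticMap.polarBilin Q (f v) (w : M) + QuadraticMap.polarBilin Q (v : M) (f w) = 0) :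
    ∃ X : Module.End κ M,
      (∀ v w : M, QuadraticMap.polarBilin Q (X v) w + QuadraticMap.polarBilin Q v (X w) = 0) ∧
      ∀ v : N, X (v : M) = f v :=
  LinearMap.BilinForm.exists_skewAdjoint_extension ⟨QuadraticMap.polar_comm Q⟩ hnd N f hf

/-- Let `(M, q)` be a non-degenerate quadratic space over a field `κ` of
characteristic ≠ 2 and `N ⊆ M` a subspace.  Set
`𝔞_N = { f ∈ Hom(N, M) : [f v, w]_q + [v, f w]_q = 0 for all v, w ∈ N }`.
Then the restriction map `Lie(SO(M)) → 𝔞_N`, `X ↦ X|_N`, is surjective: every such `f`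
extends to a skew-adjoint endomorphism `X` of `M`. -/
theorem stmt_2 {κ M : Type*} [Field κ] (hchar : (2 : κ) ≠ 0)
    [AddCommGroup M] [Module κ M] [FiniteDimensional κ M]
    (Q : QuadraticForm κ M)
    (hnd : (QuadraticMap.polarBilin Q).Nondegenerate)
    (N : Submodule κ M)
    (f : N →ₗ[κ] M)
    (hf : ∀ v w : N,
      QuadraticMap.polarBilin Q (f v) (w : M) + QuadraticMap.polarBilin Q (v : M) (f w) = 0) :
    ∃ X : Module.End κ M,
      (∀ v w : M, QuadraticMap.polarBilin Q (X v) w + QuadraticMap.polarBilin Q v (X w) = 0) ∧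
      ∀ v : N, X (v : M) = f v :=
  stmt_2_general Q hnd N f hf
end

section
/- Let 𝒪 be a discrete valuation ring of mixed characteristic (0,p) with residue field k, and (M,q) a quadratic space over 𝒪 such that M[1/p] is non-degenerate. Assume the discriminant group disc(M) = M^∨/M is a k-vector space (i.e. killed by p). Then the assignment M' ↦ M'/M is a bijection between lattices M' ⊂ M[1/p] containing M on which q takes values in 𝒪, and subspaces of disc(M) that are isotropic for the induced 𝒪[1/p]/𝒪-valued quadratic form q̄. -/
open QuadraticMap

/-- The dual lattice `M^∨ = { x ∈ V : [x, M]_q ⊆ 𝒪 }` of an `𝒪`-lattice `M` in a quadratic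
space `(V, Q)` over the fraction field `K` of `𝒪`. -/
def dualLattice (𝒪 : Type*) {K V : Type*} [CommRing 𝒪] [Field K] [Algebra 𝒪 K]
    [AddCommGroup V] [Module K V] [Module 𝒪 V] [IsScalarTower 𝒪 K V]
    (Q : QuadraticForm K V) (M : Submodule 𝒪 V) : Submodule 𝒪 V where
  carrier := {x | ∀ m ∈ M, ∃ a : 𝒪, algebraMap 𝒪 K a = polarBilin Q x m}
  add_mem' := by
    intro x y hx hy m hm
    obtain ⟨a, ha⟩ := hx m hm
    obtain ⟨b, hb⟩ := hy m hm
    exact ⟨a + b, by simp [map_add, ha, hb]⟩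
  zero_mem' := by
    intro m hm
    exact ⟨0, by simp⟩
  smul_mem' := by
    intro c x hx m hm
    obtain ⟨a, ha⟩ := hx m hm
    refine ⟨c * a, ?_⟩
    have h1 : (c • x : V) = (algebraMap 𝒪 K c) • x := (algebraMap_smul K c x).symm
    rw [map_mul, ha, h1, LinearMap.map_smul, LinearMap.smul_apply, smul_eq_mul]

/-!
An integral lattice `N ⊇ M` pairs integrally with `M` by polarisation, so `M ⊆ N ⊆ M^∨`. By the
correspondence theorem the lattices between `M` and `M^∨` match the submodules of
`disc(M) = M^∨/M`, and `N` is integral exactly when `q̄` vanishes on `N/M`. The condition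
`N ⊆ M[1/p]` is automatic for `N ⊆ M^∨` because `p` kills `disc(M)`.
-/

section Correspondence

variable {R V : Type*} [CommRing R] [AddCommGroup V] [Module R V] {M N D : Submodule R V}

theorem Submodule.mk_mem_map_mkQ_comap_subtype_iff (hMN : M ≤ N) (x : D) :
    (Submodule.Quotient.mk x : D ⧸ M.comap D.subtype) ∈
        (N.comap D.subtype).map (M.comap D.subtype).mkQ ↔ (x : V) ∈ N := by
  change (M.comap D.subtype).mkQ x ∈ _ ↔ _
  rw [← Submodule.mem_comap, Submodule.comap_map_mkQ,
    sup_eq_right.2 (Submodule.comap_mono hMN)]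
  rfl

theorem Submodule.bijOn_map_mkQ_comap_subtype (P : V → Prop) (hMD : M ≤ D) :
    Set.BijOn (fun N : Submodule R V => (N.comap D.subtype).map (M.comap D.subtype).mkQ)
      {N | M ≤ N ∧ N ≤ D ∧ ∀ x ∈ N, P x}
      {S | ∀ x : D, (Submodule.Quotient.mk x : D ⧸ M.comap D.subtype) ∈ S → P x} := by
  refine ⟨?mapsTo, ?injOn, ?surjOn⟩
  case mapsTo =>
    rintro N ⟨hMN, -, hP⟩ x hx
    exact hP x ((mk_mem_map_mkQ_comap_subtype_iff hMN x).1 hx)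
  case injOn =>
    have le_of_eq : ∀ {N₁ N₂ : Submodule R V}, M ≤ N₁ → N₁ ≤ D → M ≤ N₂ →
        (N₁.comap D.subtype).map (M.comap D.subtype).mkQ =
          (N₂.comap D.subtype).map (M.comap D.subtype).mkQ → N₁ ≤ N₂ := by
      intro N₁ N₂ hMN₁ hN₁D hMN₂ he x hx
      rwa [← mk_mem_map_mkQ_comap_subtype_iff hMN₂ ⟨x, hN₁D hx⟩, ← he,
        mk_mem_map_mkQ_comap_subtype_iff hMN₁]
    rintro N₁ ⟨hMN₁, hN₁D, -⟩ N₂ ⟨hMN₂, hN₂D, -⟩ he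
    exact le_antisymm (le_of_eq hMN₁ hN₁D hMN₂ he) (le_of_eq hMN₂ hN₂D hMN₁ he.symm)
  case surjOn =>
    intro S hS
    refine ⟨(S.comap (M.comap D.subtype).mkQ).map D.subtype, ⟨?_, ?_, ?_⟩, ?_⟩
    · intro m hm
      have hm0 : (Submodule.Quotient.mk ⟨m, hMD hm⟩ : D ⧸ M.comap D.subtype) = 0 :=
        (Submodule.Quotient.mk_eq_zero _).2 hm
      exact ⟨⟨m, hMD hm⟩, show Submodule.Quotient.mk _ ∈ S from hm0 ▸ S.zero_mem, rfl⟩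
    · exact Submodule.map_subtype_le D _
    · rintro x ⟨y, hy, rfl⟩
      exact hS y hy
    · simp only [Submodule.comap_map_eq_of_injective D.injective_subtype,
        Submodule.map_comap_eq_of_surjective (Submodule.mkQ_surjective _)]

end Correspondence

/-- Polarisation: `[x, m] = q(x + m) - q(x) - q(m)`. -/
theorem le_dualLattice_of_integral {𝒪 K V : Type*} [CommRing 𝒪] [Field K] [Algebra 𝒪 K]
    [AddCommGroup V] [Module K V] [Module 𝒪 V] [IsScalarTower 𝒪 K V]
    {Q : QuadraticForm K V} {M N : Submodule 𝒪 V} (hMN : M ≤ N)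
    (hN : ∀ x ∈ N, ∃ a : 𝒪, algebraMap 𝒪 K a = Q x) : N ≤ dualLattice 𝒪 Q M := by
  intro x hx m hm
  obtain ⟨a, ha⟩ := hN (x + m) (N.add_mem hx (hMN hm))
  obtain ⟨b, hb⟩ := hN x hx
  obtain ⟨c, hc⟩ := hN m (hMN hm)
  exact ⟨a - b - c, by simp only [map_sub, ha, hb, hc, polarBilin_apply_apply, polar]⟩

theorem stmt_4_general (𝒪 : Type*) [CommRing 𝒪]
    (K : Type*) [Field K] [Algebra 𝒪 K]
    (p : ℕ)
    (V : Type*) [AddCommGroup V] [Module K V] [Module 𝒪 V] [IsScalarTower 𝒪 K V]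
    (Q : QuadraticForm K V)
    (M : Submodule 𝒪 V)
    (hint : ∀ x ∈ M, ∃ a : 𝒪, algebraMap 𝒪 K a = Q x)
    (hdisc : ∀ x ∈ dualLattice 𝒪 Q M, (p : 𝒪) • x ∈ M) :
    Set.BijOn
      (fun N : Submodule 𝒪 V =>
        Submodule.map (Submodule.mkQ (M.comap (dualLattice 𝒪 Q M).subtype))
          (N.comap (dualLattice 𝒪 Q M).subtype))
      {N : Submodule 𝒪 V | M ≤ N ∧ (∀ x ∈ N, ∃ nn : ℕ, (p : 𝒪) ^ nn • x ∈ M) ∧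
        (∀ x ∈ N, ∃ a : 𝒪, algebraMap 𝒪 K a = Q x)}
      {S : Submodule 𝒪 (↥(dualLattice 𝒪 Q M) ⧸ M.comap (dualLattice 𝒪 Q M).subtype) |
        ∀ x : ↥(dualLattice 𝒪 Q M),
          (Submodule.Quotient.mk x : ↥(dualLattice 𝒪 Q M) ⧸ M.comap (dualLattice 𝒪 Q M).subtype) ∈ S →
            ∃ a : 𝒪, algebraMap 𝒪 K a = Q (x : V)} := by
  convert Submodule.bijOn_map_mkQ_comap_subtype (fun x => ∃ a : 𝒪, algebraMap 𝒪 K a = Q x)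
    (le_dualLattice_of_integral le_rfl hint) using 1
  ext N
  constructor
  · rintro ⟨hMN, -, hN⟩
    exact ⟨hMN, le_dualLattice_of_integral hMN hN, hN⟩
  · rintro ⟨hMN, hND, hN⟩
    exact ⟨hMN, fun x hx => ⟨1, by simpa using hdisc x (hND hx)⟩, hN⟩

/-- Let `𝒪` be a discrete valuation ring of mixed characteristic `(0, p)`
with fraction field `K`, and `(M, q)` a full lattice in a non-degenerate quadratic space
`(V, Q)` over `K` on which `q` takes values in `𝒪`.  Assume the discriminant group
`disc(M) = M^∨/M` is killed by `p` (i.e. is a vector space over the residue field `k`).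
Then the assignment `M' ↦ M'/M` is a bijection between lattices `M' ⊆ M[1/p]` containing `M`
on which `q` takes values in `𝒪`, and subspaces of `disc(M)` that are isotropic for the
induced `K/𝒪`-valued quadratic form `q̄`. -/
theorem stmt_4 (𝒪 : Type*) [CommRing 𝒪] [IsDomain 𝒪] [IsDiscreteValuationRing 𝒪]
    (K : Type*) [Field K] [Algebra 𝒪 K] [IsFractionRing 𝒪 K]
    (p : ℕ) [Fact p.Prime] [CharZero 𝒪]
    (hp : (p : 𝒪) ∈ IsLocalRing.maximalIdeal 𝒪)
    (V : Type*) [AddCommGroup V] [Module K V] [Module 𝒪 V] [IsScalarTower 𝒪 K V]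
    (Q : QuadraticForm K V)
    (hnd : (QuadraticMap.polarBilin Q).Nondegenerate)
    (M : Submodule 𝒪 V) (hfg : M.FG)
    (hfull : Submodule.span K (M : Set V) = ⊤)
    (hint : ∀ x ∈ M, ∃ a : 𝒪, algebraMap 𝒪 K a = Q x)
    (hdisc : ∀ x ∈ dualLattice 𝒪 Q M, (p : 𝒪) • x ∈ M) :
    Set.BijOn
      (fun N : Submodule 𝒪 V =>
        Submodule.map (Submodule.mkQ (M.comap (dualLattice 𝒪 Q M).subtype))
          (N.comap (dualLattice 𝒪 Q M).subtype))
      {N : Submodule 𝒪 V | M ≤ N ∧ (∀ x ∈ N, ∃ nn : ℕ, (p : 𝒪) ^ nn • x ∈ M) ∧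
        (∀ x ∈ N, ∃ a : 𝒪, algebraMap 𝒪 K a = Q x)}
      {S : Submodule 𝒪 (↥(dualLattice 𝒪 Q M) ⧸ M.comap (dualLattice 𝒪 Q M).subtype) |
        ∀ x : ↥(dualLattice 𝒪 Q M),
          (Submodule.Quotient.mk x : ↥(dualLattice 𝒪 Q M) ⧸ M.comap (dualLattice 𝒪 Q M).subtype) ∈ S →
            ∃ a : 𝒪, algebraMap 𝒪 K a = Q (x : V)} :=
  stmt_4_general 𝒪 K p V Q M hint hdisc
end

section
/- Let 𝒪 be a discrete valuation ring of mixed characteristic (0,p), (M̃,q̃) a self-dual quadratic space over 𝒪, and (M,q) ⊂ (M̃,q̃) an isometrically embedded direct summand. Then the map M̃/(M + M^⊥) → disc(M) and the map M̃/(M + M^⊥) → disc(M^⊥) induced by the self-duality of M̃ are isomorphisms, yielding an isometry disc(M) ≅ disc(M^⊥). Consequently, M is maximal if and only if M^⊥ ⊂ M̃ is maximal. -/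
/-!
Self-duality identifies `M̃` with its `𝒪`-linear dual, so restricting functionals to the direct
summand `M` maps `M̃` onto `Hom(M, 𝒪) = M^∨ ∩ K M`; in terms of vectors this restriction is the
orthogonal projection `pM`, and its kernel is `M + M^⊥`. The lattice `M^⊥` is saturated in `M̃`,
hence also a direct summand (`𝒪` is a PID), its orthogonal projection is `1 - pM`, and
`(M^⊥)^⊥ = M`, so everything holds symmetrically.

For maximality, let `N ⊇ M^⊥` be integral and `p`-power torsion over `M^⊥`, and `x ∈ N`. Since
`x ∈ (M^⊥)^∨ ∩ K M^⊥` it is the projection `x̃ - pM x̃` of some `x̃ ∈ M̃`. The vector `y = pM x̃`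
lies in `M^∨`, has `Q y = Q x̃ - Q x ∈ 𝒪`, and is `p`-power torsion over `M`, so `M + 𝒪 y` is an
integral overlattice of `M` and maximality of `M` gives `y ∈ M`; hence `x = x̃ - y ∈ M^⊥`.
-/

open QuadraticMap

/-- The orthogonal complement `M^⊥ = { x ∈ M̃ : [x, M]_q = 0 }` of a sublattice `M` inside a
lattice `M̃`. -/
def perpLattice {𝒪 K V : Type*} [CommRing 𝒪] [Field K] [Algebra 𝒪 K]
    [AddCommGroup V] [Module K V] [Module 𝒪 V] [IsScalarTower 𝒪 K V]
    (Q : QuadraticForm K V) (Mt M : Submodule 𝒪 V) : Submodule 𝒪 V :=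
  Mt ⊓
    { carrier := {x | ∀ m ∈ M, polarBilin Q x m = 0}
      add_mem' := by
        intro x y hx hy m hm
        simp [map_add, hx m hm, hy m hm]
      zero_mem' := by intro m hm; simp
      smul_mem' := by
        intro c x hx m hm
        have h1 : (c • x : V) = (algebraMap 𝒪 K c) • x := (algebraMap_smul K c x).symm
        rw [h1, LinearMap.map_smul, LinearMap.smul_apply, hx m hm, smul_zero] }

/-- `M` is a maximal lattice: no strictly larger lattice in `M[1/p]` on which `Q` is
`𝒪`-valued. -/
def IsMaximalLattice {𝒪 K V : Type*} [CommRing 𝒪] [Field K] [Algebra 𝒪 K]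
    [AddCommGroup V] [Module K V] [Module 𝒪 V] [IsScalarTower 𝒪 K V]
    (p : ℕ) (Q : QuadraticForm K V) (M : Submodule 𝒪 V) : Prop :=
  ∀ N : Submodule 𝒪 V, M ≤ N → (∀ x ∈ N, ∃ nn : ℕ, (p : 𝒪) ^ nn • x ∈ M) →
    (∀ x ∈ N, ∃ a : 𝒪, algebraMap 𝒪 K a = Q x) → N = M

open Submodule (span)

theorem Submodule.exists_inf_eq_bot_sup_eq_of_isCompl {R V : Type*} [Ring R] [AddCommGroup V]
    [Module R V] {L S : Submodule R V} (hSL : S ≤ L) {D : Submodule R L}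
    (h : IsCompl (S.comap L.subtype) D) : ∃ C : Submodule R V, S ⊓ C = ⊥ ∧ S ⊔ C = L := by
  have hmap : (S.comap L.subtype).map L.subtype = S := by
    rw [Submodule.map_comap_subtype, inf_eq_right.mpr hSL]
  refine ⟨D.map L.subtype, ?_, ?_⟩
  · rw [← hmap, ← Submodule.map_inf _ L.injective_subtype, h.inf_eq_bot, Submodule.map_bot]
  · rw [← hmap, ← Submodule.map_sup, h.sup_eq_top, Submodule.map_subtype_top]

section FractionField

variable {𝒪 K V : Type*} [CommRing 𝒪] [Field K] [Algebra 𝒪 K]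
  [AddCommGroup V] [Module K V] [Module 𝒪 V] [IsScalarTower 𝒪 K V]

theorem Module.finite_of_fg_of_span_eq_top {L : Submodule 𝒪 V} (hfg : L.FG)
    (hL : span K (L : Set V) = ⊤) : Module.Finite K V := by
  obtain ⟨s, rfl⟩ := hfg
  exact Module.finite_def.mpr ⟨s, by rwa [Submodule.span_span_of_tower] at hL⟩

variable [IsFractionRing 𝒪 K]

theorem exists_ne_zero_smul_mem_of_mem_span [IsDomain 𝒪] {S : Submodule 𝒪 V} {v : V}
    (hv : v ∈ span K (S : Set V)) : ∃ c : 𝒪, c ≠ 0 ∧ c • v ∈ S := by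
  induction hv using Submodule.span_induction with
  | mem x hx => exact ⟨1, one_ne_zero, by simpa using hx⟩
  | zero => exact ⟨1, one_ne_zero, by simp⟩
  | add x y _ _ hx hy =>
    obtain ⟨c, hc, hcx⟩ := hx
    obtain ⟨d, hd, hdy⟩ := hy
    refine ⟨d * c, mul_ne_zero hd hc, ?_⟩
    rw [smul_add, mul_smul, mul_comm, mul_smul]
    exact S.add_mem (S.smul_mem d hcx) (S.smul_mem c hdy)
  | smul k x _ hx =>
    obtain ⟨c, hc, hcx⟩ := hx
    obtain ⟨a, b, hb, rfl⟩ := IsFractionRing.div_surjective 𝒪 k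
    have hb' : algebraMap 𝒪 K b ≠ 0 := IsFractionRing.to_map_ne_zero_of_mem_nonZeroDivisors hb
    refine ⟨b * c, mul_ne_zero (nonZeroDivisors.ne_zero hb) hc, ?_⟩
    have : (b * c) • (algebraMap 𝒪 K a / algebraMap 𝒪 K b) • x = a • c • x := by
      rw [← algebraMap_smul K (b * c), ← algebraMap_smul K a, ← algebraMap_smul K c, smul_smul,
        smul_smul, map_mul]
      congr 1
      field_simp
    rw [this]
    exact S.smul_mem a hcx

theorem mem_span_of_smul_mem {S : Submodule 𝒪 V} {c : 𝒪} (hc : c ≠ 0) {v : V} (h : c • v ∈ S) :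
    v ∈ span K (S : Set V) := by
  have hc' : algebraMap 𝒪 K c ≠ 0 := (map_ne_zero_iff _ (IsFractionRing.injective 𝒪 K)).mpr hc
  rw [← inv_smul_smul₀ hc' v, algebraMap_smul]
  exact Submodule.smul_mem _ _ (Submodule.subset_span h)

theorem span_inf_span_eq_bot [IsDomain 𝒪] {S C : Submodule 𝒪 V} (hSC : S ⊓ C = ⊥) :
    span K (S : Set V) ⊓ span K (C : Set V) = ⊥ := by
  have := Module.IsTorsionFree.trans_faithfulSMul 𝒪 K V
  refine eq_bot_iff.mpr fun v hv => ?_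
  obtain ⟨c, hc, hcv⟩ := exists_ne_zero_smul_mem_of_mem_span hv.1
  obtain ⟨d, hd, hdv⟩ := exists_ne_zero_smul_mem_of_mem_span hv.2
  have hmem : (d * c) • v ∈ S ⊓ C := by
    refine ⟨by rw [mul_smul]; exact S.smul_mem d hcv, ?_⟩
    rw [mul_comm, mul_smul]
    exact C.smul_mem c hdv
  rw [hSC, Submodule.mem_bot, smul_eq_zero] at hmem
  exact (Submodule.mem_bot K).mpr (hmem.resolve_left (mul_ne_zero hd hc))

theorem isCompl_span_of_inf_eq_bot [IsDomain 𝒪] {L S C : Submodule 𝒪 V} (hSC : S ⊓ C = ⊥)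
    (hSCL : S ⊔ C = L) (hL : span K (L : Set V) = ⊤) :
    IsCompl (span K (S : Set V)) (span K (C : Set V)) := by
  refine ⟨disjoint_iff.mpr (span_inf_span_eq_bot hSC), codisjoint_iff.mpr ?_⟩
  rw [← Submodule.span_union, ← Submodule.span_span_of_tower 𝒪, Submodule.span_union,
    Submodule.span_eq, Submodule.span_eq, hSCL, hL]

theorem mem_of_mem_span_of_inf_eq_bot [IsDomain 𝒪] {L S C : Submodule 𝒪 V} (hSC : S ⊓ C = ⊥)
    (hSCL : S ⊔ C = L) {v : V} (hv : v ∈ L) (hvS : v ∈ span K (S : Set V)) : v ∈ S := by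
  rw [← hSCL] at hv
  obtain ⟨s, hs, c, hc, rfl⟩ := Submodule.mem_sup.mp hv
  have hcS : c ∈ span K (S : Set V) := by
    simpa using Submodule.sub_mem _ hvS (Submodule.subset_span hs)
  have hc0 : c ∈ span K (S : Set V) ⊓ span K (C : Set V) := ⟨hcS, Submodule.subset_span hc⟩
  rw [span_inf_span_eq_bot hSC, Submodule.mem_bot] at hc0
  simpa [hc0] using hs

theorem exists_inf_eq_bot_sup_eq_of_saturated [IsDomain 𝒪] [IsPrincipalIdealRing 𝒪]
    {L S : Submodule 𝒪 V} (hfg : L.FG) (hSL : S ≤ L)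
    (hsat : ∀ v ∈ L, v ∈ span K (S : Set V) → v ∈ S) :
    ∃ C : Submodule 𝒪 V, S ⊓ C = ⊥ ∧ S ⊔ C = L := by
  -- `L ⧸ S` is torsion-free, hence free over the PID `𝒪`, so the quotient map splits.
  have : Module.Finite 𝒪 L := Module.Finite.iff_fg.mpr hfg
  set S' := S.comap L.subtype
  have : Module.IsTorsionFree 𝒪 (L ⧸ S') := by
    refine .of_smul_eq_zero fun c x hcx => ?_
    obtain ⟨x, rfl⟩ := S'.mkQ_surjective x
    rw [← map_smul, Submodule.mkQ_apply, Submodule.Quotient.mk_eq_zero] at hcx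
    refine or_iff_not_imp_left.mpr fun hc => (Submodule.Quotient.mk_eq_zero _).mpr ?_
    exact hsat x x.2 (mem_span_of_smul_mem (K := K) hc hcx)
  obtain ⟨σ, hσ⟩ := S'.mkQ.exists_rightInverse_of_surjective S'.range_mkQ
  have hretract : ∀ x : L, x - σ (S'.mkQ x) ∈ S' := fun x => by
    rw [← Submodule.Quotient.mk_eq_zero, ← Submodule.mkQ_apply, map_sub,
      ← LinearMap.comp_apply S'.mkQ σ, hσ, LinearMap.id_apply, sub_self]
  let r : L →ₗ[𝒪] S' := (LinearMap.id - σ ∘ₗ S'.mkQ).codRestrict S' hretract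
  have hr : ∀ x : S', r x = x := fun x => by
    ext1
    simp [r, (Submodule.Quotient.mk_eq_zero S').mpr x.2]
  exact Submodule.exists_inf_eq_bot_sup_eq_of_isCompl hSL (LinearMap.isCompl_of_proj hr)

end FractionField

section Lattice

variable {𝒪 K V : Type*} [CommRing 𝒪] [Field K] [AddCommGroup V] [Module K V] [Module 𝒪 V]
  {Q : QuadraticForm K V}

theorem polarBilin_comm (x y : V) : polarBilin Q x y = polarBilin Q y x :=
  polar_comm Q x y

theorem polarBilin_eq_zero_of_mem_span {s : Set V} {v w : V} (h : ∀ x ∈ s, polarBilin Q v x = 0)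
    (hw : w ∈ span K s) : polarBilin Q v w = 0 :=
  Submodule.span_le.mpr (fun x hx => LinearMap.mem_ker.mpr (h x hx)) hw

structure IsOrthogonalProjection (Q : QuadraticForm K V) (S : Submodule 𝒪 V) (π : V →ₗ[K] V) :
    Prop where
  mem_span : ∀ x, π x ∈ span K (S : Set V)
  polarBilin_sub_eq_zero : ∀ x, ∀ s ∈ S, polarBilin Q (x - π x) s = 0

namespace IsOrthogonalProjection

variable {S : Submodule 𝒪 V} {π : V →ₗ[K] V}

theorem polarBilin_apply_eq (hπ : IsOrthogonalProjection Q S π) (x : V) {s : V} (hs : s ∈ S) :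
    polarBilin Q (π x) s = polarBilin Q x s := by
  have := hπ.polarBilin_sub_eq_zero x s hs
  rwa [map_sub, LinearMap.sub_apply, sub_eq_zero, eq_comm] at this

theorem map_add_map_sub (hπ : IsOrthogonalProjection Q S π) (x : V) :
    Q (π x) + Q (x - π x) = Q x := by
  have horth : polar Q (π x) (x - π x) = 0 := by
    rw [← polarBilin_apply_apply, polarBilin_comm]
    exact polarBilin_eq_zero_of_mem_span (hπ.polarBilin_sub_eq_zero x) (hπ.mem_span x)
  rw [← add_zero (Q (π x) + _), ← horth, ← QuadraticMap.map_add Q (π x), add_sub_cancel]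

theorem eq_zero_of_mem_span (hπ : IsOrthogonalProjection Q S π)
    (hnd : (polarBilin Q).Nondegenerate) {v : V} (hv : v ∈ span K (S : Set V))
    (h : ∀ s ∈ S, polarBilin Q v s = 0) : v = 0 := by
  refine hnd.1 v fun w => ?_
  rw [← add_sub_cancel (π w) w, map_add, polarBilin_eq_zero_of_mem_span h (hπ.mem_span w),
    polarBilin_comm, polarBilin_eq_zero_of_mem_span (hπ.polarBilin_sub_eq_zero w) hv, add_zero]

end IsOrthogonalProjection

variable [Algebra 𝒪 K] [IsScalarTower 𝒪 K V]

theorem dualLattice_le_dualLattice {S T : Submodule 𝒪 V} (h : S ≤ T) :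
    dualLattice 𝒪 Q T ≤ dualLattice 𝒪 Q S :=
  fun _ hx s hs => hx s (h hs)

theorem le_dualLattice_of_integral_s6 {N : Submodule 𝒪 V}
    (hN : ∀ x ∈ N, Q x ∈ (algebraMap 𝒪 K).range) : N ≤ dualLattice 𝒪 Q N := by
  intro x hx y hy
  rw [polarBilin_apply_apply, polar]
  exact sub_mem (sub_mem (hN _ (N.add_mem hx hy)) (hN x hx)) (hN y hy)

theorem integral_sup_span_singleton {L : Submodule 𝒪 V}
    (hL : ∀ x ∈ L, Q x ∈ (algebraMap 𝒪 K).range) {y : V} (hy : y ∈ dualLattice 𝒪 Q L)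
    (hQy : Q y ∈ (algebraMap 𝒪 K).range) :
    ∀ z ∈ L ⊔ span 𝒪 {y}, Q z ∈ (algebraMap 𝒪 K).range := by
  intro z hz
  obtain ⟨s, hs, _, hcy, rfl⟩ := Submodule.mem_sup.mp hz
  obtain ⟨c, rfl⟩ := Submodule.mem_span_singleton.mp hcy
  rw [QuadraticMap.map_add Q, QuadraticMap.map_smul_of_tower,
    polar_smul_right_of_tower, polar_comm _ s, Algebra.smul_def, Algebra.smul_def]
  exact add_mem (add_mem (hL s hs) (mul_mem ⟨_, rfl⟩ hQy)) (mul_mem ⟨_, rfl⟩ (hy s hs))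

theorem perpLattice_le (L S : Submodule 𝒪 V) : perpLattice Q L S ≤ L :=
  inf_le_left

theorem mem_perpLattice_of_mem_span {L S : Submodule 𝒪 V} {v : V} (hv : v ∈ L)
    (hvP : v ∈ span K (perpLattice Q L S : Set V)) : v ∈ perpLattice Q L S := by
  refine ⟨hv, fun s hs => ?_⟩
  rw [polarBilin_comm]
  exact polarBilin_eq_zero_of_mem_span (fun q hq => by rw [polarBilin_comm]; exact hq.2 s hs) hvP

theorem IsMaximalLattice.mem_of_pow_smul_mem {p : ℕ} {L : Submodule 𝒪 V}
    (hmax : IsMaximalLattice p Q L) (hL : ∀ x ∈ L, Q x ∈ (algebraMap 𝒪 K).range) {y : V}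
    (hy : y ∈ dualLattice 𝒪 Q L) (hQy : Q y ∈ (algebraMap 𝒪 K).range) {n : ℕ}
    (hn : (p : 𝒪) ^ n • y ∈ L) : y ∈ L := by
  have htors : ∀ z ∈ L ⊔ span 𝒪 {y}, ∃ m : ℕ, (p : 𝒪) ^ m • z ∈ L := by
    intro z hz
    obtain ⟨s, hs, _, hcy, rfl⟩ := Submodule.mem_sup.mp hz
    obtain ⟨c, rfl⟩ := Submodule.mem_span_singleton.mp hcy
    refine ⟨n, ?_⟩
    rw [smul_add, smul_comm]
    exact L.add_mem (L.smul_mem _ hs) (L.smul_mem c hn)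
  rw [← hmax _ le_sup_left htors (integral_sup_span_singleton hL hy hQy)]
  exact Submodule.mem_sup_right (Submodule.mem_span_singleton_self y)

structure IsSelfDualLattice (Q : QuadraticForm K V) (L : Submodule 𝒪 V) : Prop where
  span_eq_top : span K (L : Set V) = ⊤
  integral : ∀ x ∈ L, Q x ∈ (algebraMap 𝒪 K).range
  dualLattice_eq : dualLattice 𝒪 Q L = L

theorem exists_mem_forall_polarBilin_eq [IsDomain 𝒪] [IsFractionRing 𝒪 K] [FiniteDimensional K V]
    (hnd : (polarBilin Q).Nondegenerate) {L S C : Submodule 𝒪 V} (hL : IsSelfDualLattice Q L)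
    (hSC : S ⊓ C = ⊥) (hSCL : S ⊔ C = L) {y : V} (hy : y ∈ dualLattice 𝒪 Q S) :
    ∃ x ∈ L, ∀ s ∈ S, polarBilin Q x s = polarBilin Q y s := by
  -- Represent `B(y, ·)` on `S`, extended by zero on `C`; self-duality puts the representative in `L`.
  have hcompl := isCompl_span_of_inf_eq_bot hSC hSCL hL.span_eq_top
  set ρ := (span K (S : Set V)).projection (span K (C : Set V)) hcompl
  have hρS : ∀ s ∈ S, ρ s = s := fun s hs =>
    Submodule.projection_apply_of_mem_left hcompl (Submodule.subset_span hs)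
  set x := (LinearMap.BilinForm.toDual (polarBilin Q) hnd).symm (polarBilin Q y ∘ₗ ρ)
  have hx : ∀ w, polarBilin Q x w = polarBilin Q y (ρ w) :=
    LinearMap.BilinForm.apply_toDual_symm_apply _
  refine ⟨x, hL.dualLattice_eq.le fun w hw => ?_, fun s hs => by rw [hx, hρS s hs]⟩
  rw [← hSCL] at hw
  obtain ⟨s, hs, c, hc, rfl⟩ := Submodule.mem_sup.mp hw
  rw [hx, map_add, hρS s hs,
    Submodule.projection_apply_of_mem_right hcompl (Submodule.subset_span hc), add_zero]
  exact hy s hs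

namespace IsOrthogonalProjection

variable {S : Submodule 𝒪 V} {π : V →ₗ[K] V}

theorem mem_dualLattice (hπ : IsOrthogonalProjection Q S π) {L : Submodule 𝒪 V}
    (hL : L ≤ dualLattice 𝒪 Q L) (hSL : S ≤ L) {x : V} (hx : x ∈ L) :
    π x ∈ dualLattice 𝒪 Q S := fun s hs => by
  rw [hπ.polarBilin_apply_eq x hs]
  exact dualLattice_le_dualLattice hSL (hL hx) s hs

theorem mem_sup_perpLattice (hπ : IsOrthogonalProjection Q S π) {L : Submodule 𝒪 V}
    (hSL : S ≤ L) {x : V} (hx : x ∈ L) (h : π x ∈ S) : x ∈ S ⊔ perpLattice Q L S :=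
  Submodule.mem_sup.mpr ⟨π x, h, x - π x,
    ⟨L.sub_mem hx (hSL h), hπ.polarBilin_sub_eq_zero x⟩, add_sub_cancel _ _⟩

theorem perp [IsDomain 𝒪] [IsFractionRing 𝒪 K] (hπ : IsOrthogonalProjection Q S π)
    {L : Submodule 𝒪 V} (hL : span K (L : Set V) = ⊤) :
    IsOrthogonalProjection Q (perpLattice Q L S) (LinearMap.id - π) where
  mem_span x := by
    rw [LinearMap.sub_apply, LinearMap.id_apply]
    obtain ⟨c, hc, hcx⟩ :=
      exists_ne_zero_smul_mem_of_mem_span (S := L) (v := x - π x) (by rw [hL]; trivial)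
    refine mem_span_of_smul_mem hc ⟨hcx, fun s hs => ?_⟩
    rw [← algebraMap_smul K, map_smul, LinearMap.smul_apply, hπ.polarBilin_sub_eq_zero x s hs,
      smul_zero]
  polarBilin_sub_eq_zero x q hq := by
    rw [LinearMap.sub_apply, LinearMap.id_apply, sub_sub_cancel, polarBilin_comm]
    exact polarBilin_eq_zero_of_mem_span (fun s hs => hq.2 s hs) (hπ.mem_span x)

theorem exists_mem_apply_eq [IsDomain 𝒪] [IsFractionRing 𝒪 K] [FiniteDimensional K V]
    (hπ : IsOrthogonalProjection Q S π) (hnd : (polarBilin Q).Nondegenerate)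
    {L C : Submodule 𝒪 V} (hL : IsSelfDualLattice Q L) (hSC : S ⊓ C = ⊥) (hSCL : S ⊔ C = L)
    {y : V} (hy : y ∈ dualLattice 𝒪 Q S ⊓ (span K (S : Set V)).restrictScalars 𝒪) :
    ∃ x ∈ L, π x = y := by
  obtain ⟨x, hxL, hxy⟩ := exists_mem_forall_polarBilin_eq hnd hL hSC hSCL hy.1
  refine ⟨x, hxL, sub_eq_zero.mp <| hπ.eq_zero_of_mem_span hnd (sub_mem (hπ.mem_span x) hy.2)
    fun s hs => ?_⟩
  rw [map_sub, LinearMap.sub_apply, hπ.polarBilin_apply_eq x hs, hxy s hs, sub_self]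

theorem perpLattice_perpLattice [IsDomain 𝒪] [IsFractionRing 𝒪 K]
    (hπ : IsOrthogonalProjection Q S π) (hnd : (polarBilin Q).Nondegenerate)
    {L : Submodule 𝒪 V} (hL : span K (L : Set V) = ⊤) (hSL : S ≤ L)
    (hsat : ∀ v ∈ L, v ∈ span K (S : Set V) → v ∈ S) :
    perpLattice Q L (perpLattice Q L S) = S := by
  refine le_antisymm (fun x hx => hsat x hx.1 ?_)
    fun s hs => ⟨hSL hs, fun q hq => by rw [polarBilin_comm]; exact hq.2 s hs⟩
  have hπ' := hπ.perp hL
  have hx' : x - π x = 0 := hπ'.eq_zero_of_mem_span hnd (hπ'.mem_span x) fun q hq =>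
    (hπ'.polarBilin_apply_eq x hq).trans (hx.2 q hq)
  rw [sub_eq_zero] at hx'
  rw [hx']
  exact hπ.mem_span x

theorem isMaximalLattice_of_perpLattice [IsDomain 𝒪] [IsFractionRing 𝒪 K]
    [FiniteDimensional K V] (hπ : IsOrthogonalProjection Q S π)
    (hnd : (polarBilin Q).Nondegenerate) {p : ℕ} (hp : (p : 𝒪) ≠ 0) {L C : Submodule 𝒪 V}
    (hL : IsSelfDualLattice Q L) (hSC : S ⊓ C = ⊥) (hSCL : S ⊔ C = L)
    (hmax : IsMaximalLattice p Q (perpLattice Q L S)) : IsMaximalLattice p Q S := by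
  intro N hSN htors hint
  have hSL : S ≤ L := hSCL ▸ le_sup_left
  refine le_antisymm (fun x hx => ?_) hSN
  obtain ⟨n, hn⟩ := htors x hx
  obtain ⟨xt, hxt, rfl⟩ := hπ.exists_mem_apply_eq hnd hL hSC hSCL
    ⟨dualLattice_le_dualLattice hSN (le_dualLattice_of_integral_s6 hint hx),
      mem_span_of_smul_mem (pow_ne_zero n hp) hn⟩
  have hπ' := hπ.perp hL.span_eq_top
  have hQ : Q (xt - π xt) ∈ (algebraMap 𝒪 K).range := by
    rw [← add_sub_cancel_left (Q (π xt)) (Q (xt - π xt)), hπ.map_add_map_sub]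
    exact sub_mem (hL.integral xt hxt) (hint _ hx)
  have htors' : (p : 𝒪) ^ n • (xt - π xt) ∈ perpLattice Q L S := by
    refine ⟨?_, fun s hs => ?_⟩
    · rw [smul_sub]
      exact L.sub_mem (L.smul_mem _ hxt) (hSL hn)
    · rw [← algebraMap_smul K, map_smul, LinearMap.smul_apply,
        hπ.polarBilin_sub_eq_zero xt s hs, smul_zero]
  have hy : xt - π xt ∈ perpLattice Q L S :=
    hmax.mem_of_pow_smul_mem (fun z hz => hL.integral z hz.1)
      (hπ'.mem_dualLattice hL.dualLattice_eq.ge (perpLattice_le L S) hxt) hQ htors'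
  refine mem_of_mem_span_of_inf_eq_bot hSC hSCL ?_ (hπ.mem_span xt)
  rw [← sub_sub_cancel xt (π xt)]
  exact L.sub_mem hxt hy.1

end IsOrthogonalProjection

end Lattice

theorem stmt_6_general (𝒪 : Type*) [CommRing 𝒪] [IsDomain 𝒪] [IsDiscreteValuationRing 𝒪]
    (K : Type*) [Field K] [Algebra 𝒪 K] [IsFractionRing 𝒪 K]
    (p : ℕ) [Fact p.Prime] [CharZero 𝒪]
    (V : Type*) [AddCommGroup V] [Module K V] [Module 𝒪 V] [IsScalarTower 𝒪 K V]
    (Q : QuadraticForm K V)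
    (hnd : (QuadraticMap.polarBilin Q).Nondegenerate)
    (Mt : Submodule 𝒪 V) (hfgt : Mt.FG)
    (hfullt : Submodule.span K (Mt : Set V) = ⊤)
    (hintt : ∀ x ∈ Mt, ∃ a : 𝒪, algebraMap 𝒪 K a = Q x)
    (hselfdual : dualLattice 𝒪 Q Mt = Mt)
    (M : Submodule 𝒪 V) (hMMt : M ≤ Mt)
    (hsummand : ∃ N' : Submodule 𝒪 V, N' ≤ Mt ∧ M ⊓ N' = ⊥ ∧ M ⊔ N' = Mt)
    (pM : V →ₗ[K] V)
    (hpM1 : ∀ x : V, pM x ∈ Submodule.span K (M : Set V))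
    (hpM2 : ∀ x : V, ∀ m ∈ M, polarBilin Q (x - pM x) m = 0) :
    (∀ x ∈ Mt,
        pM x ∈ dualLattice 𝒪 Q M ⊓ Submodule.restrictScalars 𝒪 (Submodule.span K (M : Set V)) ∧
        x - pM x ∈ dualLattice 𝒪 Q (perpLattice Q Mt M) ⊓
          Submodule.restrictScalars 𝒪 (Submodule.span K ((perpLattice Q Mt M : Set V)))) ∧
    (∀ y ∈ dualLattice 𝒪 Q M ⊓ Submodule.restrictScalars 𝒪 (Submodule.span K (M : Set V)),
        ∃ x ∈ Mt, y - pM x ∈ M) ∧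
    (∀ x ∈ Mt, pM x ∈ M → x ∈ M ⊔ perpLattice Q Mt M) ∧
    (∀ y ∈ dualLattice 𝒪 Q (perpLattice Q Mt M) ⊓
          Submodule.restrictScalars 𝒪 (Submodule.span K ((perpLattice Q Mt M : Set V))),
        ∃ x ∈ Mt, y - (x - pM x) ∈ perpLattice Q Mt M) ∧
    (∀ x ∈ Mt, x - pM x ∈ perpLattice Q Mt M → x ∈ M ⊔ perpLattice Q Mt M) ∧
    (∀ x ∈ Mt, ∃ a : 𝒪, algebraMap 𝒪 K a = Q (pM x) + Q (x - pM x)) ∧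
    (IsMaximalLattice p Q M ↔ IsMaximalLattice p Q (perpLattice Q Mt M)) := by
  obtain ⟨N', -, hMN', hMN'Mt⟩ := hsummand
  have : FiniteDimensional K V := Module.finite_of_fg_of_span_eq_top hfgt hfullt
  have hMt : IsSelfDualLattice Q Mt := ⟨hfullt, hintt, hselfdual⟩
  have hπ : IsOrthogonalProjection Q M pM := ⟨hpM1, hpM2⟩
  have hπP := hπ.perp hfullt
  have hPMt := perpLattice_le (Q := Q) Mt M
  obtain ⟨C, hPC, hPCMt⟩ :=
    exists_inf_eq_bot_sup_eq_of_saturated hfgt hPMt fun v hv => mem_perpLattice_of_mem_span hv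
  have hPP : perpLattice Q Mt (perpLattice Q Mt M) = M :=
    hπ.perpLattice_perpLattice hnd hfullt hMMt fun v hv =>
      mem_of_mem_span_of_inf_eq_bot hMN' hMN'Mt hv
  have hp : (p : 𝒪) ≠ 0 := Nat.cast_ne_zero.mpr (Fact.out : p.Prime).ne_zero
  refine ⟨fun x hx => ⟨⟨hπ.mem_dualLattice hselfdual.ge hMMt hx, hpM1 x⟩,
      ⟨hπP.mem_dualLattice hselfdual.ge hPMt hx, hπP.mem_span x⟩⟩,
    fun y hy => ?_, fun x hx h => hπ.mem_sup_perpLattice hMMt hx h, fun y hy => ?_,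
    fun x hx h => ?_, fun x hx => by rw [hπ.map_add_map_sub]; exact hintt x hx,
    fun h => hπP.isMaximalLattice_of_perpLattice hnd hp hMt hPC hPCMt (by rwa [hPP]),
    hπ.isMaximalLattice_of_perpLattice hnd hp hMt hMN' hMN'Mt⟩
  · obtain ⟨x, hx, rfl⟩ := hπ.exists_mem_apply_eq hnd hMt hMN' hMN'Mt hy
    exact ⟨x, hx, by simp⟩
  · obtain ⟨x, hx, rfl⟩ := hπP.exists_mem_apply_eq hnd hMt hPC hPCMt hy
    exact ⟨x, hx, by simp⟩
  · simpa [hPP, sup_comm] using hπP.mem_sup_perpLattice hPMt hx h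

/-- Let `𝒪` be a discrete valuation ring of mixed characteristic `(0, p)`,
`(M̃, q̃)` a self-dual quadratic lattice over `𝒪`, and `(M, q) ⊆ (M̃, q̃)` an isometrically
embedded direct summand with orthogonal complement `M^⊥`.  Let `pM` be the orthogonal
projection of `V = M̃ ⊗ K` onto the span of `M`.  Then the maps
`M̃/(M + M^⊥) → disc(M)`, `x ↦ pM x`, and `M̃/(M + M^⊥) → disc(M^⊥)`, `x ↦ x − pM x`,
induced by the self-duality of `M̃`, are isomorphisms, yielding an isometry
`disc(M) ≅ disc(M^⊥)` (the `K/𝒪`-valued forms are compatible: `Q(pM x) + Q(x − pM x) ∈ 𝒪`).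
Consequently, `M` is maximal if and only if `M^⊥ ⊆ M̃` is maximal. -/
theorem stmt_6 (𝒪 : Type*) [CommRing 𝒪] [IsDomain 𝒪] [IsDiscreteValuationRing 𝒪]
    (K : Type*) [Field K] [Algebra 𝒪 K] [IsFractionRing 𝒪 K]
    (p : ℕ) [Fact p.Prime] [CharZero 𝒪]
    (hp : (p : 𝒪) ∈ IsLocalRing.maximalIdeal 𝒪)
    (V : Type*) [AddCommGroup V] [Module K V] [Module 𝒪 V] [IsScalarTower 𝒪 K V]
    (Q : QuadraticForm K V)
    (hnd : (QuadraticMap.polarBilin Q).Nondegenerate)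
    (Mt : Submodule 𝒪 V) (hfgt : Mt.FG)
    (hfullt : Submodule.span K (Mt : Set V) = ⊤)
    (hintt : ∀ x ∈ Mt, ∃ a : 𝒪, algebraMap 𝒪 K a = Q x)
    (hselfdual : dualLattice 𝒪 Q Mt = Mt)
    (M : Submodule 𝒪 V) (hMMt : M ≤ Mt)
    (hsummand : ∃ N' : Submodule 𝒪 V, N' ≤ Mt ∧ M ⊓ N' = ⊥ ∧ M ⊔ N' = Mt)
    (pM : V →ₗ[K] V)
    (hpM1 : ∀ x : V, pM x ∈ Submodule.span K (M : Set V))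
    (hpM2 : ∀ x : V, ∀ m ∈ M, polarBilin Q (x - pM x) m = 0)
    (hpM3 : ∀ x ∈ Submodule.span K (M : Set V), pM x = x) :
    (∀ x ∈ Mt,
        pM x ∈ dualLattice 𝒪 Q M ⊓ Submodule.restrictScalars 𝒪 (Submodule.span K (M : Set V)) ∧
        x - pM x ∈ dualLattice 𝒪 Q (perpLattice Q Mt M) ⊓
          Submodule.restrictScalars 𝒪 (Submodule.span K ((perpLattice Q Mt M : Set V)))) ∧
    (∀ y ∈ dualLattice 𝒪 Q M ⊓ Submodule.restrictScalars 𝒪 (Submodule.span K (M : Set V)),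
        ∃ x ∈ Mt, y - pM x ∈ M) ∧
    (∀ x ∈ Mt, pM x ∈ M → x ∈ M ⊔ perpLattice Q Mt M) ∧
    (∀ y ∈ dualLattice 𝒪 Q (perpLattice Q Mt M) ⊓
          Submodule.restrictScalars 𝒪 (Submodule.span K ((perpLattice Q Mt M : Set V))),
        ∃ x ∈ Mt, y - (x - pM x) ∈ perpLattice Q Mt M) ∧
    (∀ x ∈ Mt, x - pM x ∈ perpLattice Q Mt M → x ∈ M ⊔ perpLattice Q Mt M) ∧
    (∀ x ∈ Mt, ∃ a : 𝒪, algebraMap 𝒪 K a = Q (pM x) + Q (x - pM x)) ∧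
    (IsMaximalLattice p Q M ↔ IsMaximalLattice p Q (perpLattice Q Mt M)) :=
  stmt_6_general 𝒪 K p V Q hnd Mt hfgt hfullt hintt hselfdual M hMMt hsummand pM hpM1 hpM2
end

section
/- Let (L,Q) be a quadratic space over ℤ_(p) (p odd) with L finite free and (L_ℚ,Q) non-degenerate. Then (L,Q) is diagonalizable: L is isometric to an orthogonal direct sum of rank-one quadratic modules ⟨a₁⟩ ⊕ ⋯ ⊕ ⟨a_m⟩ with a_i ∈ ℤ_(p) nonzero. -/
/-!
Over a discrete valuation ring in which `2` is a unit, pick `v` with `Q v` of minimal valuation.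
Then `Q v` divides every value of `Q`, hence every `polar Q v w = Q (v + w) - Q v - Q w`, while
`polar Q v v = 2 Q v`; so each `w` can be corrected by a multiple of `v` into the orthogonal
complement `K` of `v`, and `L = R v ⊕ K`. The form stays nondegenerate on the free module `K` of
smaller rank, and induction on the rank finishes the diagonalisation.
-/

instance zpSpanPrime (p : ℕ) [hp : Fact p.Prime] : (Ideal.span {(p : ℤ)}).IsPrime := by
  rw [Ideal.span_singleton_prime (by exact_mod_cast hp.out.ne_zero)]
  exact Nat.prime_iff_prime_int.mp hp.out

/-- The ring `ℤ_(p)` of integers localized at the prime `p`. -/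
abbrev Zp (p : ℕ) [Fact p.Prime] : Type :=
  Localization.AtPrime (Ideal.span {(p : ℤ)})

open Module QuadraticMap

theorem IsDiscreteValuationRing.exists_forall_dvd {R ι : Type*} [CommRing R] [IsDomain R]
    [IsDiscreteValuationRing R] [Nonempty ι] (f : ι → R) : ∃ i, ∀ j, f i ∣ f j :=
  ⟨Function.argmin (addVal R ∘ f),
    fun j => addVal_le_iff_dvd.mp (Function.argmin_le (addVal R ∘ f) j)⟩

namespace QuadraticMap

variable {R L : Type*} [CommRing R] [AddCommGroup L] [Module R L] (Q : QuadraticForm R L)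

theorem polarBilin_isRefl : (polarBilin Q).IsRefl :=
  fun x y h => (polar_comm Q y x).trans h

theorem ne_zero_of_polarBilin_nondegenerate [Nontrivial L] (hnd : (polarBilin Q).Nondegenerate) :
    Q ≠ 0 := by
  rintro rfl
  obtain ⟨x, hx⟩ := exists_ne (0 : L)
  exact hx (hnd.1 x fun y => by simp [polar])

section Splitting

variable {Q} {v : L}

theorem polarBilin_self_apply : polarBilin Q v v = 2 * Q v := by
  rw [polarBilin_apply_apply, polar_self, nsmul_eq_mul, Nat.cast_ofNat]

theorem dvd_polarBilin_of_forall_dvd (h : ∀ w, Q v ∣ Q w) (w : L) : Q v ∣ polarBilin Q v w :=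
  dvd_sub (dvd_sub (h _) (h _)) (h _)

theorem exists_add_smul_mem_ker_polarBilin [Invertible (2 : R)]
    (h : ∀ w, Q v ∣ polarBilin Q v w) (z : L) :
    ∃ c : R, z + c • v ∈ LinearMap.ker (polarBilin Q v) := by
  obtain ⟨d, hd⟩ := h z
  refine ⟨-(⅟2 * d), ?_⟩
  rw [LinearMap.mem_ker, map_add, map_smul, hd, smul_eq_mul, polarBilin_self_apply]
  linear_combination (-(Q v * d)) * invOf_mul_self (2 : R)

theorem eq_zero_of_smul_add_mem_ker_polarBilin [NoZeroDivisors R] [NeZero (2 : R)]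
    (hv : Q v ≠ 0) (c : R) (x : L) (hx : x ∈ LinearMap.ker (polarBilin Q v))
    (hcx : c • v + x = 0) : c = 0 := by
  have h : polarBilin Q v (c • v + x) = c * (2 * Q v) := by
    rw [map_add, map_smul, LinearMap.mem_ker.mp hx, add_zero, smul_eq_mul, polarBilin_self_apply]
  rw [hcx, map_zero] at h
  exact (mul_eq_zero.mp h.symm).resolve_right (mul_ne_zero two_ne_zero hv)

theorem nondegenerate_polarBilin_comp_ker_subtype (hnd : (polarBilin Q).Nondegenerate)
    (hspan : ∀ z, ∃ c : R, z + c • v ∈ LinearMap.ker (polarBilin Q v)) :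
    (polarBilin (Q.comp (LinearMap.ker (polarBilin Q v)).subtype)).Nondegenerate := by
  rw [polarBilin_comp]
  refine LinearMap.nondegenerate_restrict_of_disjoint_orthogonal (polarBilin_isRefl Q)
    (Submodule.disjoint_def.mpr fun x hxK hxK' => hnd.1 x fun w => ?_)
  obtain ⟨c, hc⟩ := hspan w
  have h := polarBilin_isRefl Q _ _ (hxK' _ hc)
  rwa [map_add, map_smul, polarBilin_isRefl Q _ _ (LinearMap.mem_ker.mp hxK), smul_zero,
    add_zero] at h

end Splitting

end QuadraticMap

theorem LinearMap.IsOrthoᵢ.cons {R M : Type*} [CommRing R] [AddCommGroup M] [Module R M]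
    {B : LinearMap.BilinForm R M} (hB : B.IsRefl) {n : ℕ} {v : M} {g : Fin n → M}
    (hv : ∀ i, B v (g i) = 0) (hg : B.IsOrthoᵢ g) :
    B.IsOrthoᵢ (Fin.cons v g : Fin (n + 1) → M) := by
  intro i j hij
  cases i using Fin.cases <;> cases j using Fin.cases <;>
    simp only [Function.onFun, Fin.cons_zero, Fin.cons_succ]
  · exact absurd rfl hij
  · exact hv _
  · exact hB _ _ (hv _)
  · exact hg (ne_of_apply_ne Fin.succ hij)

theorem QuadraticForm.exists_basis_isOrthoᵢ_polarBilin {R L : Type*} [CommRing R]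
    [IsDomain R] [IsDiscreteValuationRing R] [Invertible (2 : R)] [AddCommGroup L] [Module R L]
    [Module.Free R L] [Module.Finite R L] (Q : QuadraticForm R L)
    (hnd : (polarBilin Q).Nondegenerate) :
    ∃ e : Basis (Fin (finrank R L)) R L, (polarBilin Q).IsOrthoᵢ e ∧ ∀ i, Q (e i) ≠ 0 := by
  generalize hn : finrank R L = n
  induction n generalizing L with
  | zero => exact ⟨(finBasis R L).reindex (finCongr hn), fun i => i.elim0, fun i => i.elim0⟩
  | succ n ih =>
    have : Nontrivial L := nontrivial_of_finrank_eq_succ hn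
    obtain ⟨v, hv⟩ := IsDiscreteValuationRing.exists_forall_dvd (fun w : L => Q w)
    have hv0 : Q v ≠ 0 := fun h0 => ne_zero_of_polarBilin_nondegenerate Q hnd <|
      QuadraticMap.ext fun w => zero_dvd_iff.mp (h0 ▸ hv w)
    set K := LinearMap.ker (polarBilin Q v)
    have hspan := exists_add_smul_mem_ker_polarBilin (dvd_polarBilin_of_forall_dvd hv)
    have hindep := eq_zero_of_smul_add_mem_ker_polarBilin hv0
    have hK : finrank R K = n := by
      have := finrank_eq_card_basis (Basis.mkFinCons v (finBasis R K) hindep hspan)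
      rw [Fintype.card_fin, hn] at this
      omega
    obtain ⟨f, hf, hf0⟩ :=
      ih (Q.comp K.subtype) (nondegenerate_polarBilin_comp_ker_subtype hnd hspan) hK
    refine ⟨Basis.mkFinCons v f hindep hspan, ?_, ?_⟩
    · rw [Basis.coe_mkFinCons]
      exact .cons (polarBilin_isRefl Q) (fun i => (f i).2) fun i j hij => hf hij
    · rw [Basis.coe_mkFinCons]
      intro i
      cases i using Fin.cases
      exacts [hv0, hf0 _]

theorem Zp.isUnit_two (p : ℕ) [Fact p.Prime] (hodd : p ≠ 2) : IsUnit (2 : Zp p) := by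
  have h := (IsLocalization.AtPrime.isUnit_to_map_iff (Zp p) (Ideal.span {(p : ℤ)}) 2).mpr
    fun h2 => hodd ((Nat.prime_dvd_prime_iff_eq Fact.out Nat.prime_two).mp
      (by exact_mod_cast Ideal.mem_span_singleton.mp h2))
  simpa using h

instance (p : ℕ) [Fact p.Prime] : IsDiscreteValuationRing (Zp p) :=
  IsLocalization.AtPrime.isDiscreteValuationRing_of_dedekind_domain ℤ
    (P := Ideal.span {(p : ℤ)}) (by simp [(Fact.out : p.Prime).ne_zero]) _

/-- Let `(L, Q)` be a quadratic space over `ℤ_(p)` (`p` odd) with `L` finite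
free and `(L_ℚ, Q)` non-degenerate (equivalently, the polar form of `Q` is non-degenerate over
`ℤ_(p)`).  Then `(L, Q)` is diagonalizable: `L` admits a basis `e₁, …, e_m` which is
orthogonal for `Q` and on which `Q` takes non-zero values, i.e. `L` is isometric to an
orthogonal direct sum `⟨a₁⟩ ⊕ ⋯ ⊕ ⟨a_m⟩` with `aᵢ = Q(eᵢ) ∈ ℤ_(p)` non-zero. -/
theorem stmt_8 (p : ℕ) [Fact p.Prime] (hodd : p ≠ 2)
    {L : Type*} [AddCommGroup L] [Module (Zp p) L]
    [Module.Free (Zp p) L] [Module.Finite (Zp p) L]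
    (Q : QuadraticForm (Zp p) L)
    (hnd : (QuadraticMap.polarBilin Q).Nondegenerate) :
    ∃ (m : ℕ) (e : Module.Basis (Fin m) (Zp p) L) (a : Fin m → Zp p),
      (∀ i j, i ≠ j → QuadraticMap.polarBilin Q (e i) (e j) = 0) ∧
      (∀ i, Q (e i) = a i) ∧
      (∀ i, a i ≠ 0) := by
  have := (Zp.isUnit_two p hodd).invertible
  obtain ⟨e, he, he0⟩ := QuadraticForm.exists_basis_isOrthoᵢ_polarBilin Q hnd
  exact ⟨_, e, fun i => Q (e i), fun i j hij => he hij, fun _ => rfl, he0⟩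
end

section
/- Let v ∈ L be an element of a quadratic ℤ_(p)-lattice (L,Q) with (L_ℚ,Q) non-degenerate, such that ν_p(Q(v)) is minimal among all elements of L. Then for all w₁, w₂ ∈ L one has ν_p([w₁,w₂]_Q) ≥ ν_p(Q(v)), and L decomposes as the orthogonal direct sum ⟨v⟩ ⊕ ⟨v⟩^⊥, where the projection of w onto ⟨v⟩^⊥ is w − ([w,v]_Q/[v,v]_Q)·v. -/
namespace IsDiscreteValuationRing

variable {R : Type*} [CommRing R] [IsDomain R] [IsDiscreteValuationRing R]

theorem pow_dvd_iff_le_addVal {ϖ : R} (hϖ : Irreducible ϖ) (k : ℕ) (a : R) :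
    ϖ ^ k ∣ a ↔ (k : ℕ∞) ≤ addVal R a := by
  rw [← addVal_le_iff_dvd, addVal_pow, addVal_uniformizer hϖ, nsmul_one]

theorem dvd_of_forall_pow_dvd_imp {ϖ : R} (hϖ : Irreducible ϖ) {a b : R}
    (h : ∀ k : ℕ, ϖ ^ k ∣ a → ϖ ^ k ∣ b) : a ∣ b := by
  rw [← addVal_le_iff_dvd]
  refine ENat.forall_natCast_le_iff_le.mp fun k hk => ?_
  exact (pow_dvd_iff_le_addVal hϖ k b).1 (h k ((pow_dvd_iff_le_addVal hϖ k a).2 hk))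

end IsDiscreteValuationRing

namespace Zp

variable (p : ℕ) [Fact p.Prime]

instance : IsDiscreteValuationRing (Zp p) :=
  IsLocalization.AtPrime.isDiscreteValuationRing_of_dedekind_domain ℤ
    (P := Ideal.span {(p : ℤ)})
    (by simpa only [ne_eq, Ideal.span_singleton_eq_bot, Nat.cast_eq_zero] using
      (Fact.out : p.Prime).ne_zero) _

theorem isUnit_natCast_iff {n : ℕ} : IsUnit (n : Zp p) ↔ ¬p ∣ n := by
  rw [← map_natCast (algebraMap ℤ (Zp p)),
    IsLocalization.AtPrime.isUnit_to_map_iff (Zp p) (Ideal.span {(p : ℤ)}),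
    Ideal.primeCompl, Submonoid.mem_mk, Subsemigroup.mem_mk, Set.mem_compl_iff, SetLike.mem_coe,
    Ideal.mem_span_singleton, Int.natCast_dvd_natCast]

theorem irreducible_natCast : Irreducible (p : Zp p) := by
  rw [IsDiscreteValuationRing.irreducible_iff_uniformizer,
    ← IsLocalization.AtPrime.map_eq_maximalIdeal (Ideal.span {(p : ℤ)}), Ideal.map_span,
    Set.image_singleton, map_natCast]

end Zp

namespace QuadraticMap

variable {R M : Type*} [CommRing R] [AddCommGroup M] [Module R M]

theorem dvd_polar_of_forall_dvd {Q : QuadraticMap R M R} {a : R} (h : ∀ w, a ∣ Q w)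
    (w₁ w₂ : M) : a ∣ polar Q w₁ w₂ :=
  ((h _).sub (h _)).sub (h _)

theorem ne_zero_of_polarBilin_nondegenerate_s9 [Nontrivial M] {Q : QuadraticMap R M R}
    (h : Q.polarBilin.Nondegenerate) : Q ≠ 0 := by
  rintro rfl
  obtain ⟨x, hx⟩ := exists_ne (0 : M)
  exact hx (h.1 x fun y => by simp [polar])

end QuadraticMap

namespace LinearMap

variable {R M : Type*} [CommRing R] [AddCommGroup M] [Module R M] (f : M →ₗ[R] R) {v : M}

theorem apply_sub_smul_eq_zero {w : M} {c : R} (hc : f w = c * f v) : f (w - c • v) = 0 := by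
  rw [map_sub, map_smul, hc, smul_eq_mul, sub_self]

theorem isCompl_span_singleton_ker (hreg : f v ∈ nonZeroDivisors R) (hdvd : ∀ w, f v ∣ f w) :
    IsCompl (R ∙ v) (ker f) := by
  constructor
  · rw [Submodule.disjoint_def]
    intro x hx hker
    obtain ⟨a, rfl⟩ := Submodule.mem_span_singleton.mp hx
    rw [mem_ker, map_smul, smul_eq_mul, mul_right_mem_nonZeroDivisors_eq_zero_iff hreg] at hker
    rw [hker, zero_smul]
  · rw [codisjoint_iff, eq_top_iff]
    rintro w -
    obtain ⟨c, hc⟩ := hdvd w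
    exact Submodule.mem_sup.mpr
      ⟨c • v, Submodule.smul_mem _ _ (Submodule.mem_span_singleton_self v), w - c • v,
        apply_sub_smul_eq_zero f (by rw [hc, mul_comm]), add_sub_cancel _ _⟩

end LinearMap

theorem stmt_9_general (p : ℕ) [Fact p.Prime] (hodd : p ≠ 2)
    {L : Type*} [AddCommGroup L] [Module (Zp p) L] [Nontrivial L]
    (Q : QuadraticForm (Zp p) L)
    (hnd : (QuadraticMap.polarBilin Q).Nondegenerate)
    (v : L)
    (hmin : ∀ w : L, ∀ kk : ℕ, (p : Zp p) ^ kk ∣ Q v → (p : Zp p) ^ kk ∣ Q w) :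
    (∀ w₁ w₂ : L, ∀ kk : ℕ,
        (p : Zp p) ^ kk ∣ Q v → (p : Zp p) ^ kk ∣ QuadraticMap.polarBilin Q w₁ w₂) ∧
    (∀ w : L, ∃ c : Zp p,
        QuadraticMap.polarBilin Q w v = c * QuadraticMap.polarBilin Q v v ∧
        QuadraticMap.polarBilin Q (w - c • v) v = 0) ∧
    IsCompl (Submodule.span (Zp p) {v}) (LinearMap.ker (QuadraticMap.polarBilin Q v)) := by
  have hQv_dvd (w : L) : Q v ∣ Q w :=
    IsDiscreteValuationRing.dvd_of_forall_pow_dvd_imp (Zp.irreducible_natCast p) (hmin w)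
  have hpolar_dvd := QuadraticMap.dvd_polar_of_forall_dvd hQv_dvd
  have h2 : IsUnit (2 : Zp p) := by
    exact_mod_cast (Zp.isUnit_natCast_iff p).2 fun h =>
      hodd ((Nat.prime_dvd_prime_iff_eq Fact.out Nat.prime_two).mp h)
  have hvv : QuadraticMap.polarBilin Q v v = 2 * Q v := by
    rw [QuadraticMap.polarBilin_apply_apply, QuadraticMap.polar_self, nsmul_eq_mul, Nat.cast_ofNat]
  have hvv_dvd (w : L) : QuadraticMap.polarBilin Q v v ∣ QuadraticMap.polarBilin Q v w := by
    rw [hvv]; exact h2.mul_left_dvd.2 (hpolar_dvd v w)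
  have hQv : Q v ≠ 0 := fun h0 => QuadraticMap.ne_zero_of_polarBilin_nondegenerate_s9 hnd <|
    QuadraticMap.ext fun w => zero_dvd_iff.1 (h0 ▸ hQv_dvd w)
  have hvv_ne : QuadraticMap.polarBilin Q v v ≠ 0 := hvv ▸ mul_ne_zero h2.ne_zero hQv
  have hsymm (w : L) : QuadraticMap.polarBilin Q w v = QuadraticMap.polarBilin Q v w :=
    QuadraticMap.polar_comm _ _ _
  refine ⟨fun w₁ w₂ k hk => hk.trans (hpolar_dvd w₁ w₂), fun w => ?_,
    LinearMap.isCompl_span_singleton_ker _ (mem_nonZeroDivisors_of_ne_zero hvv_ne) hvv_dvd⟩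
  obtain ⟨c, hc⟩ := hvv_dvd w
  rw [mul_comm] at hc
  exact ⟨c, (hsymm w).trans hc, (hsymm _).trans (LinearMap.apply_sub_smul_eq_zero _ hc)⟩

/-- Let `v ∈ L` be an element of a quadratic `ℤ_(p)`-lattice `(L, Q)` with
`(L_ℚ, Q)` non-degenerate, such that `ν_p(Q v)` is minimal among all elements of `L`
(expressed via divisibility: every power of `p` dividing `Q v` divides `Q w` for all `w`).
Then for all `w₁, w₂ ∈ L` one has `ν_p([w₁, w₂]_Q) ≥ ν_p(Q v)`; the projection of `w` onto
`⟨v⟩^⊥` is `w − ([w,v]_Q/[v,v]_Q) • v` (the quotient makes sense in `ℤ_(p)`); and `L`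
decomposes as the orthogonal direct sum `⟨v⟩ ⊕ ⟨v⟩^⊥`. -/
theorem stmt_9 (p : ℕ) [Fact p.Prime] (hodd : p ≠ 2)
    {L : Type*} [AddCommGroup L] [Module (Zp p) L] [Nontrivial L]
    [Module.Free (Zp p) L] [Module.Finite (Zp p) L]
    (Q : QuadraticForm (Zp p) L)
    (hnd : (QuadraticMap.polarBilin Q).Nondegenerate)
    (v : L)
    (hmin : ∀ w : L, ∀ kk : ℕ, (p : Zp p) ^ kk ∣ Q v → (p : Zp p) ^ kk ∣ Q w) :
    (∀ w₁ w₂ : L, ∀ kk : ℕ,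
        (p : Zp p) ^ kk ∣ Q v → (p : Zp p) ^ kk ∣ QuadraticMap.polarBilin Q w₁ w₂) ∧
    (∀ w : L, ∃ c : Zp p,
        QuadraticMap.polarBilin Q w v = c * QuadraticMap.polarBilin Q v v ∧
        QuadraticMap.polarBilin Q (w - c • v) v = 0) ∧
    IsCompl (Submodule.span (Zp p) {v}) (LinearMap.ker (QuadraticMap.polarBilin Q v)) :=
  stmt_9_general p hodd Q hnd v hmin
end

section
/- For every positive element a ∈ ℤ_(p)^{>0} (p odd) there exists a positive-definite self-dual quadratic space E₊(a) over ℤ_(p) of rank 2 such that ⟨a⟩ embeds isometrically as a direct summand of E₊(a). Concretely, the binary form a x² + x y + c y² with c = p c', c' ∈ ℤ^{>0}_(p) chosen so that 1 − 4 a c' < 0, has discriminant 1 − 4 p a c' which is negative and a unit in ℤ_(p). -/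
section BinaryForm

variable {R : Type*} [CommRing R]

open QuadraticMap LinearMap in
noncomputable def binaryForm (a b c : R) : QuadraticForm R (R × R) :=
  a • linMulLin (fst R R R) (fst R R R) + b • linMulLin (fst R R R) (snd R R R) +
    c • linMulLin (snd R R R) (snd R R R)

theorem binaryForm_apply (a b c : R) (z : R × R) :
    binaryForm a b c z = a * z.1 ^ 2 + b * z.1 * z.2 + c * z.2 ^ 2 := by
  simp [binaryForm, QuadraticMap.linMulLin_apply]
  ring

theorem polarBilin_binaryForm_apply (a b c : R) (z w : R × R) :
    QuadraticMap.polarBilin (binaryForm a b c) z w =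
      2 * a * z.1 * w.1 + b * (z.1 * w.2 + z.2 * w.1) + 2 * c * z.2 * w.2 := by
  simp only [QuadraticMap.polarBilin_apply_apply, QuadraticMap.polar, binaryForm_apply,
    Prod.fst_add, Prod.snd_add]
  ring

theorem bijective_polarBilin_binaryForm {a b c : R} (hdisc : IsUnit (b ^ 2 - 4 * a * c)) :
    Function.Bijective (QuadraticMap.polarBilin (binaryForm a b c)) := by
  obtain ⟨v, hv⟩ := hdisc.exists_left_inv
  -- the Gram matrix `!![2a, b; b, 2c]` has determinant `-(b² - 4ac)`; invert it by its adjugate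
  refine Function.bijective_iff_has_inverse.mpr
    ⟨fun f => (v * (b * f (0, 1) - 2 * c * f (1, 0)), v * (b * f (1, 0) - 2 * a * f (0, 1))),
      fun z => ?_, fun f => ?_⟩
  · simp only [polarBilin_binaryForm_apply]
    ext
    · linear_combination z.1 * hv
    · linear_combination z.2 * hv
  · ext
    · simp only [LinearMap.coe_comp, Function.comp_apply, LinearMap.inl_apply,
        polarBilin_binaryForm_apply]
      linear_combination f (1, 0) * hv
    · simp only [LinearMap.coe_comp, Function.comp_apply, LinearMap.inr_apply,
        polarBilin_binaryForm_apply]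
      linear_combination f (0, 1) * hv

theorem isCompl_span_inl_range_inr :
    IsCompl (Submodule.span R {((1 : R), (0 : R))}) (LinearMap.range (LinearMap.inr R R R)) := by
  have : LinearMap.inl R R R = LinearMap.toSpanSingleton R (R × R) (1, 0) := by
    ext <;> simp
  rw [LinearMap.span_singleton_eq_range, ← this]
  exact LinearMap.isCompl_range_inl_inr

end BinaryForm

theorem binaryForm_pos {K : Type*} [Field K] [LinearOrder K] [IsStrictOrderedRing K] {a b c : K}
    (ha : 0 < a) (hdisc : b ^ 2 - 4 * a * c < 0) {z : K × K} (hz : z ≠ 0) :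
    0 < binaryForm a b c z := by
  have hsquare : 4 * a * binaryForm a b c z =
      (2 * a * z.1 + b * z.2) ^ 2 + (4 * a * c - b ^ 2) * z.2 ^ 2 := by
    rw [binaryForm_apply]
    ring
  refine pos_of_mul_pos_right ?_ (by positivity : (0 : K) ≤ 4 * a)
  rw [hsquare]
  rcases eq_or_ne z.2 0 with hy | hy
  · have hx : z.1 ≠ 0 := fun hx => hz (Prod.ext hx hy)
    simpa [hy] using sq_pos_of_ne_zero (mul_ne_zero (mul_ne_zero two_ne_zero ha.ne') hx)
  · exact add_pos_of_nonneg_of_pos (sq_nonneg _)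
      (mul_pos (by linarith) (sq_pos_of_ne_zero hy))

theorem IsLocalization.injective_ringHom_of_int {M : Submonoid ℤ} {S : Type*} [CommRing S]
    [Algebra ℤ S] [IsLocalization M S] {K : Type*} [Ring K] [CharZero K] (f : S →+* K) :
    Function.Injective f := by
  refine (injective_iff_map_eq_zero f).mpr fun x hx => ?_
  obtain ⟨⟨r, s⟩, hrs⟩ := IsLocalization.surj M x
  have hr : (r : K) = 0 := by
    simpa [hx] using (congrArg f hrs).symm
  rw [Int.cast_eq_zero.mp hr, map_zero] at hrs
  exact (IsLocalization.map_units S s).mul_left_eq_zero.mp hrs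

namespace Zp

variable (p : ℕ) [Fact p.Prime]

theorem not_isUnit_natCast_self : ¬IsUnit (p : Zp p) := by
  have : (p : Zp p) = algebraMap ℤ (Zp p) p := by simp
  rw [this, IsLocalization.AtPrime.isUnit_to_map_iff (Zp p) (Ideal.span {(p : ℤ)})]
  exact fun h => h (Ideal.mem_span_singleton_self _)

theorem isUnit_one_sub_natCast_mul (t : Zp p) : IsUnit (1 - p * t) :=
  IsLocalRing.isUnit_one_sub_self_of_mem_nonunits _
    fun h => not_isUnit_natCast_self p (isUnit_of_mul_isUnit_left h)

end Zp

theorem stmt_10_general (p : ℕ) [Fact p.Prime]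
    (φ : Zp p →+* ℚ) (a : Zp p) (ha : 0 < φ a) :
    ∃ c' : Zp p, 0 < φ c' ∧
      φ (1 - 4 * a * c') < 0 ∧
      φ (1 - 4 * (p : Zp p) * a * c') < 0 ∧
      IsUnit (1 - 4 * (p : Zp p) * a * c') ∧
      ∃ Q : QuadraticForm (Zp p) (Zp p × Zp p),
        (∀ z : Zp p × Zp p, Q z = a * z.1 ^ 2 + z.1 * z.2 + (p : Zp p) * c' * z.2 ^ 2) ∧
        Q ((1 : Zp p), (0 : Zp p)) = a ∧
        Function.Bijective ⇑(QuadraticMap.polarBilin Q) ∧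
        (∃ N : Submodule (Zp p) (Zp p × Zp p),
          IsCompl (Submodule.span (Zp p) {((1 : Zp p), (0 : Zp p))}) N) ∧
        (∀ z : Zp p × Zp p, z ≠ 0 → 0 < φ (Q z)) := by
  obtain ⟨n, hn⟩ := exists_lt_nsmul (mul_pos four_pos ha) 1
  rw [nsmul_eq_mul] at hn
  have hn0 : (0 : ℚ) < n := by nlinarith
  have hp : (1 : ℚ) ≤ p := by exact_mod_cast (Fact.out : p.Prime).one_lt.le
  have hdisc : 1 - 4 * p * φ a * n < 0 := by nlinarith
  have hunit : IsUnit (1 - 4 * (p : Zp p) * a * n) := by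
    simpa only [mul_assoc, mul_left_comm _ (p : Zp p)] using
      Zp.isUnit_one_sub_natCast_mul p (4 * a * n)
  have hφinj := IsLocalization.injective_ringHom_of_int
    (M := (Ideal.span {(p : ℤ)}).primeCompl) φ
  refine ⟨n, by simpa using hn0, by simp [map_ofNat]; linarith, by simpa [map_ofNat] using hdisc,
    hunit, binaryForm a 1 (p * n), fun z => by simp [binaryForm_apply],
    by simp [binaryForm_apply], bijective_polarBilin_binaryForm ?_,
    ⟨_, isCompl_span_inl_range_inr⟩, fun z hz => ?_⟩
  · rwa [show (1 : Zp p) ^ 2 - 4 * a * (p * n) = 1 - 4 * p * a * n by ring]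
  have hφz : Prod.map φ φ z ≠ 0 := fun h =>
    hz (Prod.map_injective.mpr ⟨hφinj, hφinj⟩ (h.trans (by simp [Prod.ext_iff])))
  have hφQ : φ (binaryForm a 1 (p * n) z) = binaryForm (φ a) 1 (p * n) (Prod.map φ φ z) := by
    simp [binaryForm_apply]
  rw [hφQ]
  exact binaryForm_pos ha (by linarith) hφz

/-- For every positive element `a ∈ ℤ_(p)^{>0}` (`p` odd; positivity is
measured via the canonical embedding `φ : ℤ_(p) → ℚ`) there exists a positive-definite
self-dual quadratic space `E₊(a)` over `ℤ_(p)` of rank 2 such that `⟨a⟩` embeds isometrically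
as a direct summand of `E₊(a)`.  Concretely, there is `c' ∈ ℤ_(p)^{>0}` with `1 − 4ac' < 0`
such that the binary form `Q(x, y) = a x² + x y + p c' y²` has discriminant `1 − 4pac'` which
is negative and a unit in `ℤ_(p)`; the vector `(1, 0)` realizes `a` and spans a direct
summand, the polar form of `Q` is unimodular (self-duality), and `Q` is positive definite. -/
theorem stmt_10 (p : ℕ) [Fact p.Prime] (hodd : p ≠ 2)
    (φ : Zp p →+* ℚ) (a : Zp p) (ha : 0 < φ a) :
    ∃ c' : Zp p, 0 < φ c' ∧
      φ (1 - 4 * a * c') < 0 ∧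
      φ (1 - 4 * (p : Zp p) * a * c') < 0 ∧
      IsUnit (1 - 4 * (p : Zp p) * a * c') ∧
      ∃ Q : QuadraticForm (Zp p) (Zp p × Zp p),
        (∀ z : Zp p × Zp p, Q z = a * z.1 ^ 2 + z.1 * z.2 + (p : Zp p) * c' * z.2 ^ 2) ∧
        Q ((1 : Zp p), (0 : Zp p)) = a ∧
        Function.Bijective ⇑(QuadraticMap.polarBilin Q) ∧
        (∃ N : Submodule (Zp p) (Zp p × Zp p),
          IsCompl (Submodule.span (Zp p) {((1 : Zp p), (0 : Zp p))}) N) ∧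
        (∀ z : Zp p × Zp p, z ≠ 0 → 0 < φ (Q z)) :=
  stmt_10_general p φ a ha
end

section
/- Let W = W(k) for k algebraically closed of characteristic p > 2, let L_cris be a finite free self-dual quadratic W-module, and let L' ⊂ L_cris be a direct summand such that the quadratic form restricted to L' is not divisible by p. Let F¹L̄ ⊂ L' ⊗ k be an isotropic line. Then there exists an isotropic line F¹(L' ⊗ 𝒪_𝔏) ⊂ L' ⊗ 𝒪_𝔏 lifting F¹L̄, where 𝒪_𝔏 = W[√p]. -/
/-!
Pick `u ∈ L'` with `Q u` a unit and look for the line spanned by `y = v + T u` with `T ∈ W[√p]`.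
Isotropy of `y` is the quadratic equation `Q(u) T² + B(v, u) T + Q(v) = 0`, whose discriminant is a
square in `W[√p]`: every nonzero element of `W` is `p ^ m` times a unit, units of `W` are squares by
Hensel's lemma (`k` is algebraically closed and `2` is invertible), and `p = (√p)²`. As
`Q v ≡ 0` mod `p`, one of the two roots reduces to `0` modulo `√p`, so `y ≡ v`; and `y` spans a
direct summand because some coordinate of the primitive vector `v` is a unit, and stays one in `y`.
-/

open Polynomial
open scoped TensorProduct

theorem quadratic_eq_zero_of_discrim_eq_sq {R : Type*} [CommRing R] {a b c x : R}
    (ha : IsUnit (2 * a)) (h : discrim a b c = (2 * a * x + b) ^ 2) :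
    a * (x * x) + b * x + c = 0 := by
  have h2 : IsUnit (2 : R) := isUnit_of_mul_isUnit_left ha
  rw [← (ha.mul h2).mul_right_eq_zero]
  rw [discrim] at h
  linear_combination -h

theorem Module.Basis.exists_not_dvd_repr {ι R M : Type*} [CommRing R] [AddCommGroup M]
    [Module R M] (b : Module.Basis ι R M) {r : R} {v : M} (hv : ¬ ∃ z, v = r • z) :
    ∃ i, ¬ r ∣ b.repr v i := by
  by_contra! h
  choose g hg using h
  refine hv ⟨∑ i ∈ (b.repr v).support, g i • b i, ?_⟩
  simp only [Finset.smul_sum, smul_smul, ← hg]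
  simpa [Finsupp.linearCombination_apply, Finsupp.sum] using (b.linearCombination_repr v).symm

theorem LinearMap.isCompl_span_singleton_ker_s17 {A N : Type*} [CommRing A] [AddCommGroup N]
    [Module A N] (φ : N →ₗ[A] A) {y : N} (hy : IsUnit (φ y)) :
    IsCompl (A ∙ y) (LinearMap.ker φ) := by
  refine ⟨?_, ?_⟩
  · rw [Submodule.disjoint_def]
    rintro x hx hker
    obtain ⟨a, rfl⟩ := Submodule.mem_span_singleton.mp hx
    rw [LinearMap.mem_ker, map_smul, smul_eq_mul, hy.mul_left_eq_zero] at hker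
    rw [hker, zero_smul]
  · rw [codisjoint_iff, eq_top_iff]
    rintro x -
    refine Submodule.mem_sup.mpr ⟨(φ x * hy.unit⁻¹) • y,
      Submodule.smul_mem _ _ (Submodule.mem_span_singleton_self y), _, ?_, add_sub_cancel _ _⟩
    rw [LinearMap.mem_ker, map_sub, map_smul, smul_eq_mul, mul_assoc, IsUnit.val_inv_mul,
      mul_one, sub_self]

theorem QuadraticForm.baseChange_tmul_add_smul_tmul {R A M : Type*} [CommRing R] [CommRing A]
    [Algebra R A] [AddCommGroup M] [Module R M] [Invertible (2 : R)]
    (Q : QuadraticForm R M) (v u : M) (T : A) :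
    Q.baseChange A ((1 : A) ⊗ₜ v + T • (1 : A) ⊗ₜ u) =
      algebraMap R A (Q u) * (T * T) + algebraMap R A (QuadraticMap.polar Q v u) * T +
        algebraMap R A (Q v) := by
  let : Invertible (2 : A) := (Invertible.map (algebraMap R A) 2).copy 2 (map_ofNat _ _).symm
  have hpolar : QuadraticMap.polar (Q.baseChange A) (1 ⊗ₜ v) (1 ⊗ₜ u) =
      algebraMap R A (QuadraticMap.polar Q v u) := by
    rw [← QuadraticMap.polarBilin_apply_apply, QuadraticForm.polarBilin_baseChange,
      LinearMap.BilinForm.baseChange_tmul, mul_one, QuadraticMap.polarBilin_apply_apply,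
      Algebra.algebraMap_eq_smul_one]
  rw [QuadraticMap.map_add (Q.baseChange A), QuadraticMap.map_smul,
    QuadraticMap.polar_smul_right, hpolar]
  simp only [QuadraticForm.baseChange_tmul, mul_one, smul_eq_mul, Algebra.algebraMap_eq_smul_one]
  ring

theorem AdjoinRoot.root_X_sq_sub_C_sq {R : Type*} [CommRing R] (a : R) :
    root (X ^ 2 - C a) ^ 2 = of (X ^ 2 - C a) a := by
  have h := AdjoinRoot.mk_self (f := X ^ 2 - C a)
  rwa [map_sub, map_pow, mk_X, mk_C, sub_eq_zero] at h

theorem AdjoinRoot.exists_eq_of_add_of_mul_root_X_sq_sub_C {R : Type*} [CommRing R] (a : R)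
    (x : AdjoinRoot (X ^ 2 - C a)) :
    ∃ r s : R, x = of (X ^ 2 - C a) r + of (X ^ 2 - C a) s * root (X ^ 2 - C a) := by
  rcases subsingleton_or_nontrivial (AdjoinRoot (X ^ 2 - C a)) with h | h
  · exact ⟨0, 0, Subsingleton.elim _ _⟩
  have := (of (X ^ 2 - C a)).domain_nontrivial
  have hmonic : (X ^ 2 - C a).Monic := monic_X_pow_sub_C a two_ne_zero
  obtain ⟨f, hf, rfl⟩ := (AdjoinRoot.powerBasis' hmonic).exists_eq_aeval x
  have hdeg : f.natDegree ≤ 1 := by simpa [Nat.lt_succ_iff] using hf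
  refine ⟨f.coeff 0, f.coeff 1, ?_⟩
  conv_lhs => rw [eq_X_add_C_of_natDegree_le_one hdeg]
  simp [add_comm]

theorem HenselianRing.isSquare_of_sub_sq_mem {R : Type*} [CommRing R] {I : Ideal R}
    [HenselianRing R I] {u s₀ : R} (hu : u - s₀ ^ 2 ∈ I)
    (hs₀ : IsUnit (Ideal.Quotient.mk I (2 * s₀))) : IsSquare u := by
  obtain ⟨s, hs, -⟩ := HenselianRing.is_henselian (X ^ 2 - C u)
    (monic_X_pow_sub_C u two_ne_zero) s₀
    (by rw [← neg_mem_iff]; simpa using hu)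
    (by rwa [derivative_sub, derivative_C, sub_zero, derivative_X_pow, eval_mul, eval_pow, eval_X,
      pow_one, eval_C, Nat.cast_ofNat])
  refine ⟨s, ?_⟩
  simp only [IsRoot, eval_sub, eval_pow, eval_X, eval_C, sub_eq_zero] at hs
  rw [← hs, sq]

namespace WittVector

variable {p : ℕ} [Fact p.Prime] {k : Type*} [Field k] [CharP k p]

theorem isUnit_iff_constantCoeff_ne_zero {x : WittVector p k} :
    IsUnit x ↔ constantCoeff x ≠ 0 :=
  ⟨fun h => (h.map constantCoeff).ne_zero, isUnit_of_coeff_zero_ne_zero x⟩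

local notation "𝒪" => AdjoinRoot ((X : (WittVector p k)[X]) ^ 2 - C (p : WittVector p k))
local notation "ϖ" => AdjoinRoot.root ((X : (WittVector p k)[X]) ^ 2 - C (p : WittVector p k))

noncomputable def adjoinSqrtPResidue : 𝒪 →+* k :=
  AdjoinRoot.lift constantCoeff 0 (by simp [map_natCast])

@[simp]
theorem adjoinSqrtPResidue_algebraMap (a : WittVector p k) :
    adjoinSqrtPResidue (algebraMap (WittVector p k) 𝒪 a) = constantCoeff a :=
  AdjoinRoot.lift_of _

@[simp]
theorem adjoinSqrtPResidue_root : adjoinSqrtPResidue (ϖ : 𝒪) = 0 :=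
  AdjoinRoot.lift_root _

theorem isUnit_of_adjoinSqrtPResidue_ne_zero {x : 𝒪} (hx : adjoinSqrtPResidue x ≠ 0) :
    IsUnit x := by
  obtain ⟨r, s, rfl⟩ := AdjoinRoot.exists_eq_of_add_of_mul_root_X_sq_sub_C (p : WittVector p k) x
  simp only [← AdjoinRoot.algebraMap_eq, map_add, map_mul, adjoinSqrtPResidue_algebraMap,
    adjoinSqrtPResidue_root, mul_zero, add_zero] at hx
  have hnorm : (algebraMap _ 𝒪 r + algebraMap _ 𝒪 s * ϖ) *
      (algebraMap _ 𝒪 r - algebraMap _ 𝒪 s * ϖ) = algebraMap _ 𝒪 (r ^ 2 - p * s ^ 2) := by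
    rw [map_sub, map_mul, map_pow, map_pow, AdjoinRoot.algebraMap_eq,
      ← AdjoinRoot.root_X_sq_sub_C_sq]
    ring
  refine isUnit_of_mul_isUnit_left (hnorm ▸ (isUnit_iff_constantCoeff_ne_zero.mpr ?_).map _)
  rw [map_sub, map_mul, map_pow, map_pow, map_natCast, CharP.cast_eq_zero, zero_mul, sub_zero]
  exact pow_ne_zero 2 hx

variable [PerfectRing k p]

theorem p_dvd_iff_constantCoeff_eq_zero {x : WittVector p k} :
    (p : WittVector p k) ∣ x ↔ constantCoeff x = 0 := by
  rw [← Ideal.mem_span_singleton, ← ker_constantCoeff, RingHom.mem_ker]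

theorem isUnit_iff_not_p_dvd {x : WittVector p k} : IsUnit x ↔ ¬ (p : WittVector p k) ∣ x := by
  rw [isUnit_iff_constantCoeff_ne_zero, p_dvd_iff_constantCoeff_eq_zero]

theorem isSquare_of_isUnit [IsAlgClosed k] [Invertible (2 : WittVector p k)]
    {u : WittVector p k} (hu : IsUnit u) : IsSquare u := by
  obtain ⟨s, hs⟩ := IsAlgClosed.exists_pow_nat_eq (constantCoeff u) two_pos
  have hs₀ : constantCoeff (teichmuller p s) = s := teichmuller_coeff_zero p s
  apply HenselianRing.isSquare_of_sub_sq_mem (I := Ideal.span {(p : WittVector p k)})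
    (s₀ := teichmuller p s)
  · rw [← ker_constantCoeff, RingHom.mem_ker, map_sub, map_pow, hs₀, hs, sub_self]
  · refine IsUnit.map _ (isUnit_iff_constantCoeff_ne_zero.mpr ?_)
    rw [map_mul, hs₀]
    refine mul_ne_zero ((isUnit_of_invertible (2 : WittVector p k)).map constantCoeff).ne_zero ?_
    rintro rfl
    exact isUnit_iff_constantCoeff_ne_zero.mp hu (by simpa using hs.symm)

theorem root_dvd_of_adjoinSqrtPResidue_eq_zero {x : 𝒪} (hx : adjoinSqrtPResidue x = 0) :
    ϖ ∣ x := by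
  obtain ⟨r, s, rfl⟩ := AdjoinRoot.exists_eq_of_add_of_mul_root_X_sq_sub_C (p : WittVector p k) x
  simp only [map_add, map_mul, ← AdjoinRoot.algebraMap_eq, adjoinSqrtPResidue_algebraMap,
    adjoinSqrtPResidue_root, mul_zero, add_zero, ← p_dvd_iff_constantCoeff_eq_zero] at hx
  obtain ⟨r, rfl⟩ := hx
  refine ⟨ϖ * AdjoinRoot.of _ r + AdjoinRoot.of _ s, ?_⟩
  rw [map_mul, ← AdjoinRoot.root_X_sq_sub_C_sq]
  ring

theorem isSquare_algebraMap_adjoinSqrtP [IsAlgClosed k] [Invertible (2 : WittVector p k)]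
    (a : WittVector p k) : IsSquare (algebraMap (WittVector p k) 𝒪 a) := by
  rcases eq_or_ne a 0 with rfl | ha
  · exact ⟨0, by simp⟩
  obtain ⟨m, u, rfl⟩ := exists_eq_pow_p_mul' a ha
  obtain ⟨s, hs⟩ := isSquare_of_isUnit u.isUnit
  refine ⟨ϖ ^ m * algebraMap _ 𝒪 s, ?_⟩
  rw [map_mul, map_pow, hs, map_mul, AdjoinRoot.algebraMap_eq, ← AdjoinRoot.root_X_sq_sub_C_sq]
  ring

theorem exists_quadratic_root_adjoinSqrtPResidue_eq_zero [IsAlgClosed k]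
    [Invertible (2 : WittVector p k)] {a b c : WittVector p k} (ha : IsUnit a)
    (hc : (p : WittVector p k) ∣ c) :
    ∃ T : 𝒪, adjoinSqrtPResidue T = 0 ∧
      algebraMap _ 𝒪 a * (T * T) + algebraMap _ 𝒪 b * T + algebraMap _ 𝒪 c = 0 := by
  -- Of the two square roots of the discriminant, take the one congruent to `b`: then the root
  -- `(r - b) / 2a` of the quadratic formula reduces to zero.
  obtain ⟨r, hr, hrb⟩ : ∃ r : 𝒪, algebraMap _ 𝒪 (discrim a b c) = r * r ∧
      adjoinSqrtPResidue r = constantCoeff b := by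
    obtain ⟨r, hr⟩ := isSquare_algebraMap_adjoinSqrtP (discrim a b c)
    have hres :
        adjoinSqrtPResidue r * adjoinSqrtPResidue r = constantCoeff b * constantCoeff b := by
      rw [← map_mul, ← hr, adjoinSqrtPResidue_algebraMap, discrim, map_sub, map_mul,
        p_dvd_iff_constantCoeff_eq_zero.mp hc, mul_zero, sub_zero, map_pow, sq]
    rcases mul_self_eq_mul_self_iff.mp hres with h | h
    · exact ⟨r, hr, h⟩
    · exact ⟨-r, by rw [neg_mul_neg, hr], by rw [map_neg, h, neg_neg]⟩
  have h2a : IsUnit (2 * algebraMap _ 𝒪 a) := by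
    rw [← map_ofNat (algebraMap (WittVector p k) 𝒪) 2, ← map_mul]
    exact ((isUnit_of_invertible 2).mul ha).map _
  refine ⟨(r - algebraMap _ 𝒪 b) * ((h2a.unit⁻¹ : 𝒪ˣ) : 𝒪), ?_,
    quadratic_eq_zero_of_discrim_eq_sq h2a ?_⟩
  · rw [map_mul, map_sub, hrb, adjoinSqrtPResidue_algebraMap, sub_self, zero_mul]
  · rw [mul_left_comm, IsUnit.mul_val_inv, mul_one, sub_add_cancel, sq r, ← hr, discrim, discrim]
    simp only [map_sub, map_mul, map_pow, map_ofNat]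

theorem exists_isCompl_span_one_tmul_add_root_smul {M : Type*} [AddCommGroup M]
    [Module (WittVector p k) M] [Module.Free (WittVector p k) M] {v : M}
    (hv : ¬ ∃ z : M, v = (p : WittVector p k) • z) (w : 𝒪 ⊗[WittVector p k] M) :
    ∃ N, IsCompl (𝒪 ∙ ((1 : 𝒪) ⊗ₜ v + ϖ • w)) N := by
  let b := Module.Free.chooseBasis (WittVector p k) M
  obtain ⟨i, hi⟩ := b.exists_not_dvd_repr hv
  let φ : 𝒪 ⊗[WittVector p k] M →ₗ[𝒪] 𝒪 :=
    (Algebra.TensorProduct.rid _ 𝒪 𝒪).toLinearMap ∘ₗ (b.coord i).baseChange 𝒪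
  have hφ : φ ((1 : 𝒪) ⊗ₜ v) = algebraMap _ 𝒪 (b.repr v i) := by simp [φ, Algebra.smul_def]
  refine ⟨_, LinearMap.isCompl_span_singleton_ker_s17 φ (isUnit_of_adjoinSqrtPResidue_ne_zero ?_)⟩
  rw [map_add, map_smul, hφ, smul_eq_mul, map_add, map_mul, adjoinSqrtPResidue_root, zero_mul,
    add_zero, adjoinSqrtPResidue_algebraMap]
  exact mt p_dvd_iff_constantCoeff_eq_zero.mpr hi

end WittVector

open WittVector in
theorem stmt_17_general {p : ℕ} [Fact p.Prime]
    {k : Type*} [Field k] [IsAlgClosed k] [CharP k p] [PerfectRing k p]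
    [Invertible (2 : WittVector p k)]
    {M : Type*} [AddCommGroup M] [Module (WittVector p k) M]
    [Module.Free (WittVector p k) M]
    (Q : QuadraticForm (WittVector p k) M)
    (L' : Submodule (WittVector p k) M)
    (hnotdiv : ∃ x ∈ L', ¬ ((p : WittVector p k) ∣ Q x))
    (v : M) (hvL : v ∈ L')
    (hprim : ¬ ∃ z : M, v = (p : WittVector p k) • z)
    (hiso : (p : WittVector p k) ∣ Q v) :
    ∃ y : (AdjoinRoot ((Polynomial.X : Polynomial (WittVector p k)) ^ 2 -
        Polynomial.C ((p : WittVector p k)))) ⊗[WittVector p k] M,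
      y ∈ Submodule.span (AdjoinRoot ((Polynomial.X : Polynomial (WittVector p k)) ^ 2 -
          Polynomial.C ((p : WittVector p k))))
        ((fun x : M => (1 : AdjoinRoot ((Polynomial.X : Polynomial (WittVector p k)) ^ 2 -
          Polynomial.C ((p : WittVector p k)))) ⊗ₜ[WittVector p k] x) '' L') ∧
      (QuadraticForm.baseChange (AdjoinRoot ((Polynomial.X : Polynomial (WittVector p k)) ^ 2 -
          Polynomial.C ((p : WittVector p k)))) Q) y = 0 ∧
      (∃ z, y - (1 : AdjoinRoot ((Polynomial.X : Polynomial (WittVector p k)) ^ 2 -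
          Polynomial.C ((p : WittVector p k)))) ⊗ₜ[WittVector p k] v =
          (AdjoinRoot.root ((Polynomial.X : Polynomial (WittVector p k)) ^ 2 -
            Polynomial.C ((p : WittVector p k)))) • z) ∧
      (∃ N', IsCompl (Submodule.span (AdjoinRoot ((Polynomial.X : Polynomial (WittVector p k)) ^ 2 -
          Polynomial.C ((p : WittVector p k)))) {y}) N') := by
  obtain ⟨u, huL, hu⟩ := hnotdiv
  obtain ⟨T, hT, hroot⟩ := exists_quadratic_root_adjoinSqrtPResidue_eq_zero
    (b := QuadraticMap.polar Q v u) (isUnit_iff_not_p_dvd.mpr hu) hiso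
  obtain ⟨t, rfl⟩ := root_dvd_of_adjoinSqrtPResidue_eq_zero hT
  refine ⟨1 ⊗ₜ v + (AdjoinRoot.root _ * t) • 1 ⊗ₜ u, ?_, ?_, ⟨t • 1 ⊗ₜ u, ?_⟩, ?_⟩
  · exact Submodule.add_mem _ (Submodule.subset_span ⟨v, hvL, rfl⟩)
      (Submodule.smul_mem _ _ (Submodule.subset_span ⟨u, huL, rfl⟩))
  · rw [QuadraticForm.baseChange_tmul_add_smul_tmul, hroot]
  · rw [add_sub_cancel_left, mul_smul]
  · rw [mul_smul]
    exact exists_isCompl_span_one_tmul_add_root_smul hprim _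

/-- Let `W = W(k)` for `k` algebraically closed of characteristic `p > 2`,
let `L_cris` be a finite free self-dual quadratic `W`-module, and let `L' ⊆ L_cris` be a
direct summand such that the quadratic form restricted to `L'` is not divisible by `p`.
Let `F¹L̄ ⊆ L' ⊗ k` be an isotropic line, spanned by the reduction of a primitive vector
`v ∈ L'` with `Q v ≡ 0 (mod p)` (recall that the maximal ideal of `W(k)` is `(p)`).  Then
there exists an isotropic line `F¹(L' ⊗ 𝒪_𝔏) ⊆ L' ⊗ 𝒪_𝔏` lifting `F¹L̄`, where
`𝒪_𝔏 = W[√p]`: i.e. there is `y ∈ L' ⊗ 𝒪_𝔏` spanning a direct summand line, isotropic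
for the base-changed form, and congruent to `1 ⊗ v` modulo the maximal ideal `(√p)`. -/
theorem stmt_17 {p : ℕ} [Fact p.Prime] (hp2 : 2 < p)
    {k : Type*} [Field k] [IsAlgClosed k] [CharP k p] [PerfectRing k p]
    [Invertible (2 : WittVector p k)]
    {M : Type*} [AddCommGroup M] [Module (WittVector p k) M]
    [Module.Free (WittVector p k) M] [Module.Finite (WittVector p k) M]
    (Q : QuadraticForm (WittVector p k) M)
    (hselfdual : Function.Bijective ⇑(QuadraticMap.polarBilin Q))
    (L' : Submodule (WittVector p k) M) (hsummand : ∃ N, IsCompl L' N)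
    (hnotdiv : ∃ x ∈ L', ¬ ((p : WittVector p k) ∣ Q x))
    (v : M) (hvL : v ∈ L')
    (hprim : ¬ ∃ z : M, v = (p : WittVector p k) • z)
    (hiso : (p : WittVector p k) ∣ Q v) :
    ∃ y : (AdjoinRoot ((Polynomial.X : Polynomial (WittVector p k)) ^ 2 -
        Polynomial.C ((p : WittVector p k)))) ⊗[WittVector p k] M,
      y ∈ Submodule.span (AdjoinRoot ((Polynomial.X : Polynomial (WittVector p k)) ^ 2 -
          Polynomial.C ((p : WittVector p k))))
        ((fun x : M => (1 : AdjoinRoot ((Polynomial.X : Polynomial (WittVector p k)) ^ 2 -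
          Polynomial.C ((p : WittVector p k)))) ⊗ₜ[WittVector p k] x) '' L') ∧
      (QuadraticForm.baseChange (AdjoinRoot ((Polynomial.X : Polynomial (WittVector p k)) ^ 2 -
          Polynomial.C ((p : WittVector p k)))) Q) y = 0 ∧
      (∃ z, y - (1 : AdjoinRoot ((Polynomial.X : Polynomial (WittVector p k)) ^ 2 -
          Polynomial.C ((p : WittVector p k)))) ⊗ₜ[WittVector p k] v =
          (AdjoinRoot.root ((Polynomial.X : Polynomial (WittVector p k)) ^ 2 -
            Polynomial.C ((p : WittVector p k)))) • z) ∧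
      (∃ N', IsCompl (Submodule.span (AdjoinRoot ((Polynomial.X : Polynomial (WittVector p k)) ^ 2 -
          Polynomial.C ((p : WittVector p k)))) {y}) N') :=
  stmt_17_general Q L' hnotdiv v hvL hprim hiso
end
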